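/- arXiv:1902.03957 — 8 statements merged into one kernel-verified Lean document; each statement's English description precedes it below -/
import Mathlib

section
/- If E ⊆ ℝ^d is porous, then there exist a constant C ≥ 1 and an exponent t ∈ (0,d) such that for every x ∈ E and all radii 0 < r < R ≤ 1, the set E ∩ B(x,R) can be covered by at most C(R/r)^t balls of radius r centered in E. -/
/-!
Fix `B = E ∩ B(x, R)` and `λ = κ / 10`. At a scale `ρ ≤ R`, the points of a maximal
`3ρ`-separated subset `S` of `B` carry disjoint pores of radius `κρ / 2`; these lie in the
`ρ`-neighbourhood of `B` but miss its `λρ`-neighbourhood, while the `5ρ`-balls about `S` cover the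
`ρ`-neighbourhood. Comparing Haar measures, shrinking the neighbourhood from `ρ` to `λρ` multiplies
its measure by at most `q = 1 - λ^d`. After `k` steps, with `λ^k R ≈ r`, packing disjoint
`r/2`-balls about an `r`-separated subset of `B` bounds its size by `(4R/r)^d q^k ≲ (R/r)^(d - s)`
with `λ^s = q`; here `s > 0` as `q < 1`, and `s < d` as `λ^d < 1/2 < q`.
-/

/-- A set `E ⊆ ℝ^d` is porous if there exists `κ ∈ (0,1]` such that for all `x ∈ E` and
all radii `r ≤ 1` there exists `z ∈ B(x,r)` with `B(z, κr) ⊆ B(x,r) \ E`. -/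
def Porous {d : ℕ} (E : Set (EuclideanSpace ℝ (Fin d))) : Prop :=
  ∃ κ : ℝ, 0 < κ ∧ κ ≤ 1 ∧ ∀ x ∈ E, ∀ r : ℝ, 0 < r → r ≤ 1 →
    ∃ z ∈ Metric.ball x r, Metric.ball z (κ * r) ⊆ Metric.ball x r \ E

open Metric Set MeasureTheory Bornology Module Real

section Metric

variable {X : Type*} [PseudoMetricSpace X] {B M : Set X} {δ : ℝ}

def HasPoresAt (κ ρ : ℝ) (B : Set X) : Prop :=
  ∀ y ∈ B, ∃ z ∈ ball y ρ, ball z (κ * ρ) ⊆ ball y ρ \ B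

lemma HasPoresAt.mono {κ ρ : ℝ} {E : Set X} (hBE : B ⊆ E) (h : HasPoresAt κ ρ E) :
    HasPoresAt κ ρ B := fun y hy ↦
  (h y (hBE hy)).imp fun _ ⟨hzy, hz⟩ ↦ ⟨hzy, hz.trans (sdiff_subset_sdiff_right hBE)⟩

lemma TotallyBounded.finite_of_pairwise_le_dist (hB : TotallyBounded B) (hδ : 0 < δ)
    (hMB : M ⊆ B) (hM : M.Pairwise (δ ≤ dist · ·)) : M.Finite := by
  obtain ⟨t, ht, hBt⟩ := Metric.totallyBounded_iff.1 hB (δ / 2) (by positivity)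
  refine (ht.biUnion fun y _ ↦ Subsingleton.finite (s := M ∩ ball y (δ / 2)) ?_).subset
    fun a ha ↦ ?_
  · exact fun a ⟨haM, hay⟩ b ⟨hbM, hby⟩ ↦ by_contra fun hab ↦ by
      have := dist_triangle_right a b y
      linarith [hM haM hbM hab, mem_ball.1 hay, mem_ball.1 hby]
  · obtain ⟨y, hy, hay⟩ := mem_iUnion₂.1 (hBt (hMB ha))
    exact mem_iUnion₂.2 ⟨y, hy, ha, hay⟩

lemma TotallyBounded.exists_finset_pairwise_le_dist_subset_iUnion_ball (hB : TotallyBounded B)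
    (hδ : 0 < δ) : ∃ S : Finset X, ↑S ⊆ B ∧ (S : Set X).Pairwise (δ ≤ dist · ·) ∧
      B ⊆ ⋃ y ∈ S, ball y δ := by
  obtain ⟨M, ⟨hMB, hM⟩, hmax⟩ := zorn_subset {M | M ⊆ B ∧ M.Pairwise (δ ≤ dist · ·)}
    fun c hc hchain ↦ ⟨⋃₀ c, ⟨sUnion_subset fun s hs ↦ (hc hs).1,
      (pairwise_sUnion hchain.directedOn).2 fun s hs ↦ (hc hs).2⟩, fun _ ↦ subset_sUnion_of_mem⟩
  have hfin := hB.finite_of_pairwise_le_dist hδ hMB hM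
  refine ⟨hfin.toFinset, by simpa using hMB, by simpa using hM, fun p hp ↦ ?_⟩
  by_contra hpM
  simp only [Finite.mem_toFinset, mem_iUnion, mem_ball, exists_prop, not_exists, not_and,
    not_lt] at hpM
  have hins : insert p M ⊆ B ∧ (insert p M).Pairwise (δ ≤ dist · ·) :=
    ⟨insert_subset hp hMB,
      pairwise_insert.2 ⟨hM, fun y hy _ ↦ ⟨hpM y hy, dist_comm p y ▸ hpM y hy⟩⟩⟩
  have := hpM p (hmax hins (subset_insert p M) (mem_insert p M))
  linarith [dist_self p]

lemma disjoint_ball_cthickening_of_disjoint_ball {z : X} {ε η : ℝ} (hB : Disjoint (ball z ε) B)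
    (hδ : 0 ≤ δ) (h : δ + η < ε) :
    Disjoint (ball z η) (cthickening δ B) := by
  refine disjoint_left.2 fun v hvz hvB ↦ ?_
  obtain ⟨p, hpB, hvp⟩ :=
    mem_thickening_iff.1 (cthickening_subset_thickening' (show 0 < ε - η by linarith)
      (show δ < ε - η by linarith) B hvB)
  have hpz : p ∈ ball z ε := mem_ball.2 (by linarith [dist_triangle_left p z v, mem_ball.1 hvz])
  exact disjoint_left.1 hB hpz hpB

lemma HasPoresAt.exists_pores {κ ρ : ℝ} (holes : HasPoresAt κ ρ B) (hB : TotallyBounded B)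
    (hκ0 : 0 < κ) (hκ1 : κ ≤ 1) (hρ : 0 < ρ) :
    ∃ (S : Finset X) (z : X → X), cthickening ρ B ⊆ ⋃ y ∈ S, ball y (5 * ρ) ∧
      (S : Set X).PairwiseDisjoint (fun y ↦ ball (z y) (κ * ρ / 2)) ∧
      ⋃ y ∈ S, ball (z y) (κ * ρ / 2) ⊆ cthickening ρ B \ cthickening (κ / 10 * ρ) B := by
  obtain ⟨S, hSB, hSsep, hBS⟩ :=
    hB.exists_finset_pairwise_le_dist_subset_iUnion_ball (by positivity : 0 < 3 * ρ)
  choose! z hzy hzB using fun y (hy : y ∈ S) ↦ holes y (hSB hy)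
  have hκρ0 : 0 < κ * ρ := by positivity
  have hκρ : κ * ρ ≤ ρ := mul_le_of_le_one_left hρ.le hκ1
  refine ⟨S, z, fun v hv ↦ ?_, fun a ha b hb hab ↦ ball_disjoint_ball ?_,
    iUnion₂_subset fun y hy ↦ subset_sdiff.2 ⟨?_, ?_⟩⟩
  · obtain ⟨p, hpB, hvp⟩ := mem_thickening_iff.1
      (cthickening_subset_thickening' (by positivity : 0 < 2 * ρ) (by linarith) B hv)
    obtain ⟨y, hy, hpy⟩ := mem_iUnion₂.1 (hBS hpB)
    exact mem_iUnion₂.2 ⟨y, hy, mem_ball.2 (by linarith [dist_triangle v p y, mem_ball.1 hpy])⟩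
  · linarith [dist_triangle4 a (z a) (z b) b, hSsep ha hb hab, mem_ball'.1 (hzy a ha),
      mem_ball.1 (hzy b hb)]
  · exact (ball_subset_ball (by linarith)).trans <| (hzB y hy).trans <| sdiff_subset.trans <|
      ball_subset_closedBall.trans <| closedBall_subset_cthickening (hSB hy) ρ
  · exact disjoint_ball_cthickening_of_disjoint_ball
      (disjoint_sdiff_left.mono_left (hzB y hy)) (by positivity) (by linarith)

end Metric

lemma logb_one_sub_pow_mem_Ioo {l : ℝ} {n : ℕ} (hl0 : 0 < l) (hl : 2 * l < 1) (hn : n ≠ 0) :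
    logb l (1 - l ^ n) ∈ Ioo 0 (n : ℝ) := by
  have hln : l ^ n ≤ l := pow_le_of_le_one hl0.le (by linarith) hn
  have hln0 : 0 < l ^ n := by positivity
  refine ⟨logb_pos_of_base_lt_one hl0 (by linarith) (by linarith) (by linarith), ?_⟩
  rw [logb_lt_iff_lt_rpow_of_base_lt_one hl0 (by linarith) (by linarith), rpow_natCast]
  linarith

lemma pow_le_inv_mul_rpow_logb {l q a : ℝ} {k : ℕ} (hl0 : 0 < l) (hl1 : l < 1) (hq0 : 0 < q)
    (hq1 : q ≤ 1) (ha : l ^ (k + 1) ≤ a) : q ^ k ≤ q⁻¹ * a ^ logb l q := by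
  have hs : 0 ≤ logb l q := logb_nonneg_of_base_lt_one hl0 hl1 hq0 hq1
  rw [le_inv_mul_iff₀ hq0, ← pow_succ']
  calc q ^ (k + 1) = (l ^ (k + 1)) ^ logb l q := by
        rw [← rpow_natCast, ← rpow_natCast, ← rpow_mul hl0.le, mul_comm, rpow_mul hl0.le,
          rpow_logb hl0 hl1.ne hq0]
    _ ≤ a ^ logb l q := rpow_le_rpow (by positivity) ha hs

section Haar

variable {V : Type*} [NormedAddCommGroup V] [NormedSpace ℝ V] [FiniteDimensional ℝ V]
  [MeasurableSpace V] [BorelSpace V] (μ : Measure V) [μ.IsAddHaarMeasure]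

lemma addHaar_real_ball_of_pos (x : V) {r : ℝ} (hr : 0 < r) :
    μ.real (ball x r) = r ^ finrank ℝ V * μ.real (ball 0 1) := by
  simp [measureReal_def, Measure.addHaar_ball_of_pos μ x hr, hr.le]

lemma measureReal_biUnion_ball_le {ι : Type*} (S : Finset ι) (c : ι → V) {r : ℝ} (hr : 0 < r) :
    μ.real (⋃ i ∈ S, ball (c i) r) ≤ S.card * (r ^ finrank ℝ V * μ.real (ball 0 1)) := by
  calc _ ≤ ∑ i ∈ S, μ.real (ball (c i) r) := measureReal_biUnion_finset_le _ _
    _ = _ := by simp [addHaar_real_ball_of_pos μ _ hr]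

lemma measureReal_biUnion_ball_of_pairwiseDisjoint {ι : Type*} {S : Finset ι} {c : ι → V}
    {r : ℝ} (hr : 0 < r) (hS : (S : Set ι).PairwiseDisjoint fun i ↦ ball (c i) r) :
    μ.real (⋃ i ∈ S, ball (c i) r) = S.card * (r ^ finrank ℝ V * μ.real (ball 0 1)) := by
  rw [measureReal_biUnion_finset hS fun _ _ ↦ measurableSet_ball]
  simp [addHaar_real_ball_of_pos μ _ hr]

theorem measureReal_cthickening_mul_le_of_hasPoresAt {B : Set V} (hB : IsBounded B)
    {κ ρ : ℝ} (hκ0 : 0 < κ) (hκ1 : κ ≤ 1) (hρ : 0 < ρ) (holes : HasPoresAt κ ρ B) :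
    μ.real (cthickening (κ / 10 * ρ) B) ≤
      (1 - (κ / 10) ^ finrank ℝ V) * μ.real (cthickening ρ B) := by
  set n := finrank ℝ V
  set ω := μ.real (ball (0 : V) 1)
  obtain ⟨S, z, cover, pores_disjoint, pores_sub⟩ :=
    holes.exists_pores (hB.isCompact_closure.totallyBounded.subset subset_closure) hκ0 hκ1 hρ
  have hfin : μ (cthickening ρ B) ≠ ⊤ := hB.cthickening.measure_lt_top.ne
  have lower : S.card * ((κ * ρ / 2) ^ n * ω) ≤
      μ.real (cthickening ρ B) - μ.real (cthickening (κ / 10 * ρ) B) := by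
    rw [← measureReal_biUnion_ball_of_pairwiseDisjoint μ (by positivity) pores_disjoint,
      ← measureReal_sdiff (cthickening_mono (by nlinarith) B) isClosed_cthickening.measurableSet]
    exact measureReal_mono pores_sub (ne_top_of_le_ne_top hfin (measure_mono sdiff_subset))
  have upper : μ.real (cthickening ρ B) ≤ S.card * ((5 * ρ) ^ n * ω) :=
    (measureReal_mono cover
      (measure_biUnion_lt_top S.finite_toSet fun _ _ ↦ measure_ball_lt_top).ne).trans
      (measureReal_biUnion_ball_le μ S (fun y ↦ y) (by positivity))
  have : (κ / 10) ^ n * μ.real (cthickening ρ B) ≤ S.card * ((κ * ρ / 2) ^ n * ω) :=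
    calc _ ≤ (κ / 10) ^ n * (S.card * ((5 * ρ) ^ n * ω)) := by gcongr
      _ = _ := by rw [show κ * ρ / 2 = κ / 10 * (5 * ρ) by ring, mul_pow (κ / 10)]; ring
  linarith

theorem measureReal_cthickening_pow_mul_le_of_hasPoresAt {B : Set V} (hB : IsBounded B)
    {κ R : ℝ} (hκ0 : 0 < κ) (hκ1 : κ ≤ 1) (hR : 0 < R)
    (holes : ∀ ρ, 0 < ρ → ρ ≤ R → HasPoresAt κ ρ B) (k : ℕ) :
    μ.real (cthickening ((κ / 10) ^ k * R) B) ≤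
      (1 - (κ / 10) ^ finrank ℝ V) ^ k * μ.real (cthickening R B) := by
  set q := 1 - (κ / 10) ^ finrank ℝ V
  have hκ10 : κ / 10 ≤ 1 := by linarith
  have hq : 0 ≤ q := sub_nonneg.2 (pow_le_one₀ (by positivity) hκ10)
  induction k with
  | zero => simp
  | succ k ih =>
    have hρ : 0 < (κ / 10) ^ k * R := by positivity
    have hρR : (κ / 10) ^ k * R ≤ R :=
      mul_le_of_le_one_left hR.le (pow_le_one₀ (by positivity) hκ10)
    calc μ.real (cthickening ((κ / 10) ^ (k + 1) * R) B)
        = μ.real (cthickening (κ / 10 * ((κ / 10) ^ k * R)) B) := by rw [pow_succ']; ring_nf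
      _ ≤ q * μ.real (cthickening ((κ / 10) ^ k * R) B) :=
        measureReal_cthickening_mul_le_of_hasPoresAt μ hB hκ0 hκ1 hρ (holes _ hρ hρR)
      _ ≤ q * (q ^ k * μ.real (cthickening R B)) := by gcongr
      _ = q ^ (k + 1) * μ.real (cthickening R B) := by ring

end Haar

theorem card_le_pow_mul_pow_of_hasPoresAt {V : Type*} [NormedAddCommGroup V] [NormedSpace ℝ V]
    [FiniteDimensional ℝ V] {B : Set V} {x : V} {κ R r : ℝ} {k : ℕ} (hBx : B ⊆ ball x R)
    (hκ0 : 0 < κ) (hκ1 : κ ≤ 1)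
    (holes : ∀ ρ, 0 < ρ → ρ ≤ R → HasPoresAt κ ρ B)
    (hr : 0 < r) (hk : r / 2 ≤ (κ / 10) ^ k * R) {T : Finset V} (hTB : ↑T ⊆ B)
    (hT : (T : Set V).Pairwise (r ≤ dist · ·)) :
    (T.card : ℝ) ≤ (4 * R / r) ^ finrank ℝ V * (1 - (κ / 10) ^ finrank ℝ V) ^ k := by
  borelize V
  set μ : Measure V := .addHaar
  set n := finrank ℝ V
  set q := 1 - (κ / 10) ^ n
  set ω := μ.real (ball (0 : V) 1)
  have hR : 0 < R := pos_of_mul_pos_right (by linarith) (by positivity : (0 : ℝ) ≤ (κ / 10) ^ k)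
  have hB : IsBounded B := isBounded_ball.subset hBx
  have hω : 0 < ω := ENNReal.toReal_pos (measure_ball_pos μ 0 one_pos).ne' measure_ball_lt_top.ne
  have packing : T.card * ((r / 2) ^ n * ω) ≤ μ.real (cthickening (r / 2) B) := by
    rw [← measureReal_biUnion_ball_of_pairwiseDisjoint μ (c := fun y ↦ y) (by positivity)
      fun a ha b hb hab ↦ ball_disjoint_ball (by linarith [hT ha hb hab])]
    exact measureReal_mono (iUnion₂_subset fun y hy ↦
      ball_subset_closedBall.trans (closedBall_subset_cthickening (hTB hy) _))
      hB.cthickening.measure_lt_top.ne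
  have initial : μ.real (cthickening R B) ≤ (2 * R) ^ n * ω := by
    calc _ ≤ μ.real (closedBall x (2 * R)) := by
          refine measureReal_mono ((cthickening_subset_of_subset R hBx).trans ?_)
            measure_closedBall_lt_top.ne
          rw [cthickening_ball hR.le hR, two_mul]
      _ = _ := Measure.addHaar_real_closedBall μ x (by positivity)
  have hq : 0 ≤ q := sub_nonneg.2 (pow_le_one₀ (by positivity) (by linarith))
  have : T.card * ((r / 2) ^ n * ω) ≤ (4 * R / r) ^ n * q ^ k * ((r / 2) ^ n * ω) :=
    calc _ ≤ μ.real (cthickening ((κ / 10) ^ k * R) B) :=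
          packing.trans
            (measureReal_mono (cthickening_mono hk B) hB.cthickening.measure_lt_top.ne)
      _ ≤ q ^ k * μ.real (cthickening R B) :=
          measureReal_cthickening_pow_mul_le_of_hasPoresAt μ hB hκ0 hκ1 hR holes k
      _ ≤ q ^ k * ((2 * R) ^ n * ω) := by gcongr
      _ = _ := by
          rw [show 2 * R = 4 * R / r * (r / 2) by field_simp; ring, mul_pow]; ring
  exact le_of_mul_le_mul_right this (by positivity)

theorem card_le_mul_rpow_of_hasPoresAt {V : Type*} [NormedAddCommGroup V] [NormedSpace ℝ V]
    [FiniteDimensional ℝ V] [Nontrivial V] {B : Set V} {x : V} {κ R r : ℝ} (hBx : B ⊆ ball x R)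
    (hκ0 : 0 < κ) (hκ1 : κ ≤ 1)
    (holes : ∀ ρ, 0 < ρ → ρ ≤ R → HasPoresAt κ ρ B)
    (hr : 0 < r) (hrR : r ≤ R) {T : Finset V} (hTB : ↑T ⊆ B)
    (hT : (T : Set V).Pairwise (r ≤ dist · ·)) :
    (T.card : ℝ) ≤ 4 ^ finrank ℝ V / (1 - (κ / 10) ^ finrank ℝ V) *
      (R / r) ^ (finrank ℝ V - logb (κ / 10) (1 - (κ / 10) ^ finrank ℝ V)) := by
  set n := finrank ℝ V
  set q := 1 - (κ / 10) ^ n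
  set s := logb (κ / 10) q
  have hR : 0 < R := hr.trans_le hrR
  have hq0 : 0 < q := sub_pos.2 (pow_lt_one₀ (by positivity) (by linarith) finrank_pos.ne')
  have hq1 : q ≤ 1 := sub_le_self _ (by positivity)
  obtain ⟨k, hk1, hk2⟩ := exists_nat_pow_near_of_lt_one (div_pos hr hR) ((div_le_one hR).2 hrR)
    (by positivity : 0 < κ / 10) (by linarith)
  rw [div_le_iff₀ hR] at hk2
  calc (T.card : ℝ) ≤ (4 * R / r) ^ n * q ^ k :=
        card_le_pow_mul_pow_of_hasPoresAt hBx hκ0 hκ1 holes hr (by linarith) hTB hT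
    _ ≤ (4 * R / r) ^ n * (q⁻¹ * (r / R) ^ s) := mul_le_mul_of_nonneg_left
        (pow_le_inv_mul_rpow_logb (by positivity) (by linarith) hq0 hq1 hk1.le) (by positivity)
    _ = 4 ^ n / q * (R / r) ^ ((n : ℝ) - s) := by
      have : 0 < (r / R) ^ s := by positivity
      rw [mul_div_assoc, mul_pow, rpow_sub (by positivity), rpow_natCast, ← inv_div r R,
        inv_rpow (by positivity)]
      field_simp

/-- If `E ⊆ ℝ^d` is porous, then there exist `C ≥ 1` and `t ∈ (0,d)` such that for every
`x ∈ E` and all `0 < r < R ≤ 1`, the set `E ∩ B(x,R)` can be covered by at most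
`C (R/r)^t` balls of radius `r` centered in `E`. -/
theorem porous_covering {d : ℕ} (hd : 0 < d) (E : Set (EuclideanSpace ℝ (Fin d)))
    (hE : Porous E) :
    ∃ C : ℝ, 1 ≤ C ∧ ∃ t : ℝ, 0 < t ∧ t < d ∧
      ∀ x ∈ E, ∀ r R : ℝ, 0 < r → r < R → R ≤ 1 →
        ∃ F : Finset (EuclideanSpace ℝ (Fin d)), ↑F ⊆ E ∧
          (F.card : ℝ) ≤ C * (R / r) ^ t ∧
          E ∩ Metric.ball x R ⊆ ⋃ y ∈ F, Metric.ball y r := by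
  obtain ⟨κ, hκ0, hκ1, hpor⟩ := hE
  have : Nontrivial (EuclideanSpace ℝ (Fin d)) :=
    Module.nontrivial_of_finrank_pos (R := ℝ) (by rwa [finrank_euclideanSpace_fin])
  obtain ⟨hs0, hsd⟩ := logb_one_sub_pow_mem_Ioo (by positivity : 0 < κ / 10) (by linarith) hd.ne'
  have hq0 : 0 < 1 - (κ / 10) ^ d := sub_pos.2 (pow_lt_one₀ (by positivity) (by linarith) hd.ne')
  refine ⟨4 ^ d / (1 - (κ / 10) ^ d),
    (one_le_div hq0).2 ((sub_le_self _ (by positivity)).trans (one_le_pow₀ (by norm_num))),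
    d - logb (κ / 10) (1 - (κ / 10) ^ d), by linarith, by linarith,
    fun x _ r R hr hrR hR1 ↦ ?_⟩
  have holes (ρ : ℝ) (hρ : 0 < ρ) (hρR : ρ ≤ R) : HasPoresAt κ ρ (E ∩ ball x R) :=
    HasPoresAt.mono inter_subset_left fun y hy ↦ hpor y hy ρ hρ (hρR.trans hR1)
  have hB : IsBounded (E ∩ ball x R) := isBounded_ball.subset inter_subset_right
  obtain ⟨T, hTB, hTsep, hBT⟩ := (hB.isCompact_closure.totallyBounded.subset subset_closure)
    |>.exists_finset_pairwise_le_dist_subset_iUnion_ball hr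
  refine ⟨T, hTB.trans inter_subset_left, ?_, hBT⟩
  simpa only [finrank_euclideanSpace_fin] using
    card_le_mul_rpow_of_hasPoresAt inter_subset_right hκ0 hκ1 holes hr hrR.le hTB hTsep
end

section
/- Strip estimate near an Ahlfors–David regular set: Let D ⊆ ℝ^d be a closed Ahlfors–David regular set. For x ∈ D, r ∈ (0, 2 diam(D)) and h ∈ (0, r), define E_{r,h} = {y ∈ B(x,r) : dist(y, D) ≤ h}. Then the Lebesgue measure satisfies |E_{r,h}| ≤ K h r^{d−1}, where K depends only on D and d. -/
/-!
Let `T` be a maximal `h`-separated subset of `D ∩ B̄(x, r + h)`. Every point of `E_{r,h}` is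
within `h` of a point of `D ∩ B̄(x, r + h)`, so the balls `B̄(t, 2h)`, `t ∈ T`, cover `E_{r,h}` and
`|E_{r,h}| ≲ #T · h^d`. The balls `B(t, h/2)` are disjoint and lie in `B(x, 3r)`, so comparing the
lower regularity bound `H^{d-1}(D ∩ B(t, h/2)) ≳ h^{d-1}` with the upper bound
`H^{d-1}(D ∩ B(x, 3r)) ≲ r^{d-1}` gives `#T ≲ (r/h)^{d-1}`, hence `|E_{r,h}| ≲ h r^{d-1}`.
The upper bound is only assumed below `diam D`; above it, `D` is compact and of finite measure.
-/

open MeasureTheory Metric Set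

theorem Metric.exists_finset_separated_cover {X : Type*} [PseudoMetricSpace X] {A : Set X}
    (hA : TotallyBounded A) {ε : ℝ} (hε : 0 < ε) :
    ∃ T : Finset X, ↑T ⊆ A ∧ ((T : Set X).Pairwise fun a b => ε < dist a b) ∧
      ∀ y ∈ A, ∃ t ∈ T, dist y t ≤ ε := by
  set δ := ε.toNNReal
  have hδ : δ / 2 ≠ 0 := by simpa [δ] using hε
  obtain ⟨N, -, hNfin, hN⟩ := exists_finite_isCover_of_totallyBounded hδ hA
  have hpack : packingNumber δ A ≠ ⊤ := by
    refine ne_top_of_le_ne_top (encard_ne_top_iff.mpr hNfin) ?_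
    calc packingNumber δ A = packingNumber (2 * (δ / 2)) A := by
          rw [mul_div_cancel₀ _ two_ne_zero]
      _ ≤ externalCoveringNumber (δ / 2) A := packingNumber_two_mul_le_externalCoveringNumber _ _
      _ ≤ N.encard := hN.externalCoveringNumber_le_encard
  have hfin : (maximalSeparatedSet δ A).Finite :=
    encard_ne_top_iff.mp (encard_maximalSeparatedSet hpack ▸ hpack)
  have hδε : ENNReal.ofReal ε = δ := rfl
  refine ⟨hfin.toFinset, by simpa using maximalSeparatedSet_subset, ?_, ?_⟩
  · intro a ha b hb hab
    have hsep : (δ : ENNReal) < edist a b :=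
      isSeparated_maximalSeparatedSet (by simpa using ha) (by simpa using hb) hab
    rwa [edist_dist, ← hδε, ENNReal.ofReal_lt_ofReal_iff_of_nonneg hε.le] at hsep
  · intro y hy
    obtain ⟨t, ht, hyt⟩ := isCover_maximalSeparatedSet hpack hy
    replace hyt : edist y t ≤ δ := hyt
    rw [edist_dist, ← hδε, ENNReal.ofReal_le_ofReal_iff hε.le] at hyt
    exact ⟨t, by simpa using ht, hyt⟩

theorem setOf_dist_lt_infDist_le_subset_iUnion_closedBall {X : Type*} [MetricSpace X]
    [ProperSpace X] {D : Set X} (hD : IsClosed D) {x : X} (hx : x ∈ D) {r h : ℝ} {T : Finset X}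
    (hT : ∀ z ∈ D ∩ closedBall x (r + h), ∃ t ∈ T, dist z t ≤ h) :
    {y | dist y x < r ∧ infDist y D ≤ h} ⊆ ⋃ t ∈ T, closedBall t (2 * h) := by
  rintro y ⟨hyx, hyD⟩
  obtain ⟨z, hzD, hyz⟩ := hD.exists_infDist_eq_dist ⟨x, hx⟩ y
  have hzx : dist z x ≤ r + h := by linarith [dist_triangle_left z x y, dist_comm y z]
  obtain ⟨t, htT, hzt⟩ := hT z ⟨hzD, mem_closedBall.2 hzx⟩
  exact mem_iUnion₂.2 ⟨t, htT, mem_closedBall.2 (by linarith [dist_triangle y z t])⟩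

section AhlforsRegular

variable {X : Type*} [MetricSpace X] [MeasurableSpace X]

def IsLowerAhlforsRegular (μ : Measure X) (D : Set X) (n : ℕ) (c : ℝ) : Prop :=
  ∀ x ∈ D, ∀ r : ℝ, 0 < r → ENNReal.ofReal r < ediam D →
    ENNReal.ofReal (c * r ^ n) ≤ μ (D ∩ ball x r)

def IsUpperAhlforsRegular (μ : Measure X) (D : Set X) (n : ℕ) (C : ℝ) : Prop :=
  ∀ x ∈ D, ∀ r : ℝ, 0 < r → ENNReal.ofReal r < ediam D →
    μ (D ∩ ball x r) ≤ ENNReal.ofReal (C * r ^ n)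

variable {μ : Measure X} {D : Set X} {n : ℕ} {c C : ℝ}

theorem IsUpperAhlforsRegular.exists_forall_measure_inter_ball_le [ProperSpace X]
    (hupper : IsUpperAhlforsRegular μ D n C) (hD : IsClosed D) (hdiam : ediam D ≠ 0)
    (hC : 0 ≤ C) :
    ∃ Λ : ℝ, 0 ≤ Λ ∧ ∀ x ∈ D, ∀ r : ℝ, 0 < r →
      μ (D ∩ ball x r) ≤ ENNReal.ofReal (Λ * r ^ n) := by
  by_cases htop : ediam D = ⊤
  · exact ⟨C, hC, fun x hx r hr => hupper x hx r hr (htop ▸ ENNReal.ofReal_lt_top)⟩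
  set δ := (ediam D).toReal
  have hδ : 0 < δ := ENNReal.toReal_pos hdiam htop
  have hδD : ENNReal.ofReal (δ / 2) < ediam D := by
    rw [← ENNReal.ofReal_toReal htop, ENNReal.ofReal_lt_ofReal_iff hδ]
    linarith
  have hcpt : IsCompact D := isCompact_of_isClosed_isBounded hD (isBounded_iff_ediam_ne_top.2 htop)
  have hfin : μ D < ⊤ :=
    hcpt.measure_lt_top_of_nhdsWithin fun x hx =>
      ⟨D ∩ ball x (δ / 2), inter_mem_nhdsWithin _ (ball_mem_nhds x (half_pos hδ)),
        (hupper x hx _ (half_pos hδ) hδD).trans_lt ENNReal.ofReal_lt_top⟩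
  refine ⟨C + (μ D).toReal / δ ^ n, by positivity, fun x hx r hr => ?_⟩
  by_cases hrD : ENNReal.ofReal r < ediam D
  · refine (hupper x hx r hr hrD).trans (ENNReal.ofReal_le_ofReal ?_)
    gcongr
    exact le_add_of_nonneg_right (by positivity)
  have hδr : δ ≤ r := ENNReal.toReal_le_of_le_ofReal hr.le (not_lt.1 hrD)
  calc μ (D ∩ ball x r) ≤ μ D := measure_mono inter_subset_left
    _ = ENNReal.ofReal (μ D).toReal := (ENNReal.ofReal_toReal hfin.ne).symm
    _ ≤ ENNReal.ofReal ((μ D).toReal / δ ^ n * r ^ n) := by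
      refine ENNReal.ofReal_le_ofReal ?_
      rw [div_mul_eq_mul_div, le_div_iff₀ (by positivity)]
      exact mul_le_mul_of_nonneg_left (pow_le_pow_left₀ hδ.le hδr n) ENNReal.toReal_nonneg
    _ ≤ ENNReal.ofReal ((C + (μ D).toReal / δ ^ n) * r ^ n) := by
      gcongr
      exact le_add_of_nonneg_left hC

theorem IsLowerAhlforsRegular.card_mul_le_measure_inter_ball [OpensMeasurableSpace X]
    (hlower : IsLowerAhlforsRegular μ D n c) (hD : IsClosed D) {T : Finset X} {x : X} {R h : ℝ}
    (hT : ↑T ⊆ D ∩ closedBall x R) (hsep : (T : Set X).Pairwise fun a b => h < dist a b)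
    (hh : 0 < h) (hdiam : ENNReal.ofReal (h / 2) < ediam D) :
    T.card * ENNReal.ofReal (c * (h / 2) ^ n) ≤ μ (D ∩ ball x (R + h)) := by
  have hdisj : (T : Set X).PairwiseDisjoint fun t => D ∩ ball t (h / 2) := fun a ha b hb hab =>
    (ball_disjoint_ball (by linarith [hsep ha hb hab])).mono inter_subset_right inter_subset_right
  calc T.card * ENNReal.ofReal (c * (h / 2) ^ n)
      = ∑ _t ∈ T, ENNReal.ofReal (c * (h / 2) ^ n) := by rw [Finset.sum_const, nsmul_eq_mul]
    _ ≤ ∑ t ∈ T, μ (D ∩ ball t (h / 2)) :=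
      Finset.sum_le_sum fun t ht => hlower t (hT ht).1 _ (half_pos hh) hdiam
    _ = μ (⋃ t ∈ T, D ∩ ball t (h / 2)) :=
      (measure_biUnion_finset hdisj fun _ _ => hD.measurableSet.inter measurableSet_ball).symm
    _ ≤ μ (D ∩ ball x (R + h)) := by
      refine measure_mono (iUnion₂_subset fun t ht => inter_subset_inter_right _ ?_)
      refine ball_subset_ball' ?_
      linarith [mem_closedBall.1 (hT ht).2]

theorem IsLowerAhlforsRegular.exists_card_separated_le [ProperSpace X] [OpensMeasurableSpace X]
    (hlower : IsLowerAhlforsRegular μ D n c) (hupper : IsUpperAhlforsRegular μ D n C)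
    (hD : IsClosed D) (hdiam : ediam D ≠ 0) (hc : 0 < c) (hC : 0 ≤ C) :
    ∃ M : ℝ, 0 < M ∧ ∀ x ∈ D, ∀ r h : ℝ, 0 < h → h ≤ r → ∀ T : Finset X,
      ↑T ⊆ D ∩ closedBall x (r + h) → ((T : Set X).Pairwise fun a b => h < dist a b) →
      (T.card : ℝ) ≤ M * (r / h) ^ n := by
  obtain ⟨Λ, hΛ, hball⟩ := hupper.exists_forall_measure_inter_ball_le hD hdiam hC
  refine ⟨max 1 (Λ * 6 ^ n / c), by positivity, fun x hx r h hh hhr T hT hsep => ?_⟩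
  have hr : 0 < r := hh.trans_le hhr
  rcases le_or_gt T.card 1 with hcard | hcard
  · calc (T.card : ℝ) ≤ 1 * 1 := by norm_cast
      _ ≤ max 1 (Λ * 6 ^ n / c) * (r / h) ^ n :=
        mul_le_mul (le_max_left _ _) (one_le_pow₀ ((one_le_div hh).2 hhr)) zero_le_one
          (by positivity)
  obtain ⟨a, ha, b, hb, hab⟩ := Finset.one_lt_card.1 hcard
  -- two points of `T` are more than `h` apart, so the lower bound applies at scale `h / 2`
  have hab' : h < dist a b := hsep ha hb hab
  have hdiam : ENNReal.ofReal (h / 2) < ediam D := calc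
    ENNReal.ofReal (h / 2) < ENNReal.ofReal (dist a b) :=
      (ENNReal.ofReal_lt_ofReal_iff (hh.trans hab')).2 (by linarith)
    _ ≤ ediam D := by rw [← edist_dist]; exact edist_le_ediam_of_mem (hT ha).1 (hT hb).1
  have hmeasure : ENNReal.ofReal (T.card * (c * (h / 2) ^ n)) ≤
      ENNReal.ofReal (Λ * (3 * r) ^ n) := by
    rw [ENNReal.ofReal_mul (by positivity), ENNReal.ofReal_natCast]
    calc _ ≤ μ (D ∩ ball x (r + h + h)) :=
          hlower.card_mul_le_measure_inter_ball hD hT hsep hh hdiam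
      _ ≤ μ (D ∩ ball x (3 * r)) :=
          measure_mono (inter_subset_inter_right _ (ball_subset_ball (by linarith)))
      _ ≤ _ := hball x hx _ (by linarith)
  have hreal := (ENNReal.ofReal_le_ofReal_iff (by positivity)).1 hmeasure
  calc (T.card : ℝ)
      ≤ Λ * (3 * r) ^ n / (c * (h / 2) ^ n) := (le_div_iff₀ (by positivity)).2 hreal
    _ = Λ * 6 ^ n / c * (r / h) ^ n := by
        rw [show (6 : ℝ) = 3 * 2 by norm_num, mul_pow, mul_pow, div_pow, div_pow]
        field_simp
    _ ≤ max 1 (Λ * 6 ^ n / c) * (r / h) ^ n := by gcongr; exact le_max_right _ _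

end AhlforsRegular

/-- Strip estimate near an Ahlfors–David regular set: if `D ⊆ ℝ^d` is closed and
Ahlfors–David regular, then for `x ∈ D`, `r ∈ (0, 2 diam D)` and `h ∈ (0,r)`, the set
`E_{r,h} = {y ∈ B(x,r) : dist(y,D) ≤ h}` satisfies `|E_{r,h}| ≤ K h r^{d-1}` with `K`
depending only on `D` and `d`. -/
theorem strip_estimate_near_ADR {d : ℕ} (hd : 1 ≤ d) (D : Set (EuclideanSpace ℝ (Fin d)))
    (hDclosed : IsClosed D) (c C : ℝ) (hc : 0 < c) (hcC : c ≤ C)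
    (hADR : ∀ x ∈ D, ∀ r : ℝ, 0 < r → ENNReal.ofReal r < EMetric.diam D →
      ENNReal.ofReal (c * r ^ (d - 1)) ≤ μH[((d : ℝ) - 1)] (D ∩ Metric.ball x r) ∧
      μH[((d : ℝ) - 1)] (D ∩ Metric.ball x r) ≤ ENNReal.ofReal (C * r ^ (d - 1))) :
    ∃ K : ℝ, 0 < K ∧ ∀ x ∈ D, ∀ r h : ℝ, 0 < r → ENNReal.ofReal r < 2 * EMetric.diam D →
      0 < h → h < r →
      volume {y | dist y x < r ∧ Metric.infDist y D ≤ h} ≤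
        ENNReal.ofReal (K * h * r ^ (d - 1)) := by
  obtain ⟨e, rfl⟩ : ∃ e, d = e + 1 := ⟨d - 1, by omega⟩
  rw [Nat.add_sub_cancel] at hADR ⊢
  rcases eq_or_ne (ediam D) 0 with hdiam | hdiam
  · refine ⟨1, one_pos, fun x _ r h _ hr => ?_⟩
    have hr' : ENNReal.ofReal r < 2 * ediam D := hr
    simp [hdiam] at hr'
  obtain ⟨M, hM, hcard⟩ := IsLowerAhlforsRegular.exists_card_separated_le
    (fun x hx r hr hrD => (hADR x hx r hr hrD).1) (fun x hx r hr hrD => (hADR x hx r hr hrD).2)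
    hDclosed hdiam hc (hc.le.trans hcC)
  set ι := (volume (ball (0 : EuclideanSpace ℝ (Fin (e + 1))) 1)).toReal
  have hι : 0 < ι := ENNReal.toReal_pos (measure_ball_pos _ _ one_pos).ne' measure_ball_lt_top.ne
  have hvol (t : EuclideanSpace ℝ (Fin (e + 1))) {ρ : ℝ} (hρ : 0 ≤ ρ) :
      volume (closedBall t ρ) = ENNReal.ofReal (ρ ^ (e + 1) * ι) := by
    rw [Measure.addHaar_closedBall volume t hρ, finrank_euclideanSpace_fin,
      ENNReal.ofReal_mul (by positivity), ENNReal.ofReal_toReal measure_ball_lt_top.ne]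
  refine ⟨M * 2 ^ (e + 1) * ι, by positivity, fun x hx r h _ _ hh hhr => ?_⟩
  obtain ⟨T, hTD, hTsep, hTcov⟩ := exists_finset_separated_cover
    ((isCompact_closedBall x (r + h)).totallyBounded.subset inter_subset_right) hh
  have hT : (T.card : ℝ) ≤ M * (r / h) ^ e := hcard x hx r h hh hhr.le T hTD hTsep
  calc volume {y | dist y x < r ∧ infDist y D ≤ h}
      ≤ volume (⋃ t ∈ T, closedBall t (2 * h)) :=
        measure_mono (setOf_dist_lt_infDist_le_subset_iUnion_closedBall hDclosed hx hTcov)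
    _ ≤ ∑ t ∈ T, volume (closedBall t (2 * h)) := measure_biUnion_finset_le _ _
    _ = ENNReal.ofReal (T.card * ((2 * h) ^ (e + 1) * ι)) := by
        rw [Finset.sum_congr rfl fun t _ => hvol t (by positivity), Finset.sum_const,
          nsmul_eq_mul, ENNReal.ofReal_mul (Nat.cast_nonneg _), ENNReal.ofReal_natCast]
    _ ≤ ENNReal.ofReal (M * (r / h) ^ e * ((2 * h) ^ (e + 1) * ι)) := by gcongr
    _ = ENNReal.ofReal (M * 2 ^ (e + 1) * ι * h * r ^ e) := by
        congr 1
        rw [div_pow]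
        field_simp
        ring
end

section
/- Corkscrew condition for locally uniform domains: Suppose O ⊆ ℝ^d is open and locally an (ε,δ)-domain near N ⊆ ∂O. Then there exists κ ∈ (0,1] such that for every x in the closure of N_{δ/2} ∩ O and every radius r ≤ 1 there exists a point z ∈ B(x,r) with B(z, κr) ⊆ O ∩ B(x,r). -/
/-- The open `δ`-neighborhood of a set `N`. -/
def Nbhd {d : ℕ} (N : Set (EuclideanSpace ℝ (Fin d))) (δ : ℝ) :
    Set (EuclideanSpace ℝ (Fin d)) :=
  {z | ∃ y ∈ N, dist z y < δ}

/-- `O` is locally an `(ε,δ)`-domain near `N ⊆ ∂O`: (i) any two distinct points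
`x,y ∈ O ∩ N_δ` with `|x-y| < δ` can be joined in `O` by a rectifiable curve of length
at most `ε⁻¹|x-y|` satisfying the cigar condition
`dist(z, ∂O ∩ N_δ) ≥ ε |z-x||z-y| / |x-y|` along the curve; (ii) positive radius: there
is `c > 0` such that every connected component `O'` of `O` with `∂O' ∩ N ≠ ∅` has
`diam O' ≥ c`. -/
def LocallyEpsDeltaDomain {d : ℕ} (O N : Set (EuclideanSpace ℝ (Fin d)))
    (ε δ : ℝ) : Prop :=
  (∀ x ∈ O ∩ Nbhd N δ, ∀ y ∈ O ∩ Nbhd N δ, x ≠ y → dist x y < δ →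
    ∃ γ : ℝ → EuclideanSpace ℝ (Fin d),
      ContinuousOn γ (Set.Icc 0 1) ∧ γ 0 = x ∧ γ 1 = y ∧
      Set.MapsTo γ (Set.Icc 0 1) O ∧
      eVariationOn γ (Set.Icc 0 1) ≤ ENNReal.ofReal (ε⁻¹ * dist x y) ∧
      ∀ s ∈ Set.Icc (0:ℝ) 1, ∀ w ∈ frontier O ∩ Nbhd N δ,
        ε * dist (γ s) x * dist (γ s) y / dist x y ≤ dist (γ s) w) ∧
  ∃ c : ℝ, 0 < c ∧ ∀ x ∈ O, (frontier (connectedComponentIn O x) ∩ N).Nonempty →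
    ENNReal.ofReal c ≤ EMetric.diam (connectedComponentIn O x)


/-!
Near a point `n ∈ N`, the cigar curves show that all points of `O` within `δ/2` of `n` lie
in one component of `O`, which therefore has `n` on its frontier and so has diameter at
least `c`.
This component, being connected, contains a point `y` at any prescribed small distance `ρ`
from a given `x₀`. On the cigar curve from `x₀` to `y`, the point at distance `ρ/2` from
`x₀` is at distance `≳ ερ` from `∂O ∩ N_δ`; a ball of that radius stays inside `N_δ`, so it
misses `∂O` altogether and, being connected, lies in `O`.
-/

open Set Metric

theorem IsPreconnected.subset_of_disjoint_frontier {X : Type*} [TopologicalSpace X]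
    {s t : Set X} (hs : IsPreconnected s) (ht : IsOpen t) (hst : (s ∩ t).Nonempty)
    (hdisj : Disjoint s (frontier t)) : s ⊆ t :=
  hs.subset_of_closure_inter_subset ht hst fun q ⟨hqt, hqs⟩ => by
    by_contra hq
    exact hdisj.notMem_of_mem_left hqs ⟨hqt, by rwa [ht.interior_eq]⟩

theorem mem_frontier_of_inter_subset {X : Type*} [TopologicalSpace X] {s t u : Set X} {x : X}
    (hs : IsOpen s) (hx : x ∈ frontier s) (hu : IsOpen u) (hxu : x ∈ u) (hts : t ⊆ s)
    (hut : u ∩ s ⊆ t) : x ∈ frontier t := by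
  have hxs : x ∉ s := by simpa [hs.interior_eq] using hx.2
  exact ⟨closure_mono hut (hu.inter_closure ⟨hxu, hx.1⟩),
    fun hxt => hxs (hts (interior_subset hxt))⟩

theorem IsPreconnected.exists_dist_eq {X : Type*} [PseudoMetricSpace X] {C : Set X}
    (hC : IsPreconnected C) {x : X} (hx : x ∈ C) {ρ : ℝ} (hρ : 0 ≤ ρ)
    (hdiam : ENNReal.ofReal (2 * ρ) < ediam C) : ∃ y ∈ C, dist x y = ρ := by
  obtain ⟨y, hyC, hy⟩ : ∃ y ∈ C, ρ ≤ dist x y := by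
    by_contra! hnear
    refine hdiam.not_ge (ediam_le fun a ha b hb => ?_)
    rw [edist_dist]
    exact ENNReal.ofReal_le_ofReal <| by
      linarith [dist_triangle_left a b x, hnear a ha, hnear b hb]
  exact hC.intermediate_value hx hyC (continuous_const.dist continuous_id).continuousOn
    ⟨by simpa using hρ, hy⟩

namespace LocallyEpsDeltaDomain

variable {d : ℕ} {O N : Set (EuclideanSpace ℝ (Fin d))} {ε δ : ℝ}

theorem mem_connectedComponentIn_of_dist_lt (h : LocallyEpsDeltaDomain O N ε δ)
    {n x p : EuclideanSpace ℝ (Fin d)} (hn : n ∈ N) (hx : x ∈ O) (hxn : dist x n < δ / 2)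
    (hp : p ∈ O) (hpn : dist p n < δ / 2) : p ∈ connectedComponentIn O x := by
  rcases eq_or_ne x p with rfl | hxp
  · exact mem_connectedComponentIn hx
  have hxn₀ := dist_nonneg (x := x) (y := n)
  obtain ⟨γ, hγc, hγ0, hγ1, hγO, -⟩ :=
    h.1 x ⟨hx, n, hn, by linarith⟩ p ⟨hp, n, hn, by linarith⟩ hxp
      (by linarith [dist_triangle_right x p n])
  have hcurve : γ '' Icc 0 1 ⊆ connectedComponentIn O x :=
    (isPreconnected_Icc.image γ hγc).subset_connectedComponentIn
      ⟨0, left_mem_Icc.2 zero_le_one, hγ0⟩ hγO.image_subset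
  exact hcurve ⟨1, right_mem_Icc.2 zero_le_one, hγ1⟩

theorem mem_frontier_connectedComponentIn (h : LocallyEpsDeltaDomain O N ε δ) (hO : IsOpen O)
    {n x : EuclideanSpace ℝ (Fin d)} (hn : n ∈ N) (hnO : n ∈ frontier O) (hx : x ∈ O)
    (hxn : dist x n < δ / 2) : n ∈ frontier (connectedComponentIn O x) :=
  mem_frontier_of_inter_subset hO hnO isOpen_ball
    (mem_ball_self (by linarith [dist_nonneg (x := x) (y := n)]))
    (connectedComponentIn_subset O x)
    fun _ ⟨hpn, hpO⟩ => h.mem_connectedComponentIn_of_dist_lt hn hx hxn hpO hpn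

theorem exists_mem_dist_eq (h : LocallyEpsDeltaDomain O N ε δ) (hO : IsOpen O)
    (hN : N ⊆ frontier O) :
    ∃ c > 0, ∀ x ∈ O, ∀ n ∈ N, dist x n < δ / 2 → ∀ ρ, 0 ≤ ρ → ρ < c →
      ∃ y ∈ O, dist x y = ρ := by
  obtain ⟨c, hc, hdiam⟩ := h.2
  refine ⟨c / 2, by positivity, fun x hx n hn hxn ρ hρ hρc => ?_⟩
  have hC : ENNReal.ofReal (2 * ρ) < ediam (connectedComponentIn O x) :=
    ((ENNReal.ofReal_lt_ofReal_iff hc).2 (by linarith)).trans_le <|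
      hdiam x hx ⟨n, h.mem_frontier_connectedComponentIn hO hn (hN hn) hx hxn, hn⟩
  obtain ⟨y, hyC, hxy⟩ := isPreconnected_connectedComponentIn.exists_dist_eq
    (mem_connectedComponentIn hx) hρ hC
  exact ⟨y, connectedComponentIn_subset O x hyC, hxy⟩

theorem exists_cigar_point (h : LocallyEpsDeltaDomain O N ε δ) (hε : 0 ≤ ε)
    {x y : EuclideanSpace ℝ (Fin d)} (hx : x ∈ O ∩ Nbhd N δ) (hy : y ∈ O ∩ Nbhd N δ)
    (hxy : x ≠ y) (hxyδ : dist x y < δ) :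
    ∃ z ∈ O, dist x z = dist x y / 2 ∧
      ∀ w ∈ frontier O ∩ Nbhd N δ, ε * dist x y / 4 ≤ dist z w := by
  obtain ⟨γ, hγc, hγ0, hγ1, hγO, -, hcigar⟩ := h.1 x hx y hy hxy hxyδ
  have hmid : dist x y / 2 ∈ Icc (dist x (γ 0)) (dist x (γ 1)) := by
    rw [hγ0, hγ1, dist_self]
    constructor <;> linarith [dist_nonneg (x := x) (y := y)]
  obtain ⟨t, ht, hxz⟩ := intermediate_value_Icc zero_le_one
    ((continuous_const.dist continuous_id).comp_continuousOn hγc) hmid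
  change dist x (γ t) = dist x y / 2 at hxz
  refine ⟨γ t, hγO ht, hxz, fun w hw => ?_⟩
  have hpos : 0 < dist x y := dist_pos.2 hxy
  have hzy : dist x y / 2 ≤ dist (γ t) y := by linarith [dist_triangle x (γ t) y]
  calc ε * dist x y / 4 = ε * (dist x y / 2) * (dist x y / 2) / dist x y := by
        field_simp; ring
    _ ≤ ε * dist (γ t) x * dist (γ t) y / dist x y := by
        rw [dist_comm _ x, hxz]; gcongr
    _ ≤ dist (γ t) w := hcigar t ht w hw

theorem exists_ball_subset (h : LocallyEpsDeltaDomain O N ε δ) (hO : IsOpen O)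
    (hε : 0 < ε) (hε1 : ε ≤ 1) {n x y : EuclideanSpace ℝ (Fin d)} {ρ : ℝ} (hn : n ∈ N)
    (hx : x ∈ O) (hxn : dist x n < δ / 2) (hy : y ∈ O) (hxy : dist x y = ρ) (hρ : 0 < ρ)
    (hρδ : ρ ≤ δ / 4) :
    ∃ z, dist x z = ρ / 2 ∧ ball z (ε * ρ / 4) ⊆ O := by
  obtain ⟨z, hzO, hxz, hzw⟩ := h.exists_cigar_point hε.le ⟨hx, n, hn, by linarith⟩
    ⟨hy, n, hn, by linarith [dist_triangle_left y n x]⟩ (dist_pos.1 (by rwa [hxy]))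
    (by linarith)
  rw [hxy] at hxz hzw
  refine ⟨z, hxz, (convex_ball z _).isPreconnected.subset_of_disjoint_frontier hO
    ⟨z, mem_ball_self (by positivity), hzO⟩ ?_⟩
  refine disjoint_left.2 fun w hwz hwO => ?_
  rw [mem_ball] at hwz
  have hwn : dist w n < δ := by
    nlinarith [dist_triangle4 w z x n, dist_comm x z]
  linarith [hzw w ⟨hwO, n, hn, hwn⟩, dist_comm w z]

end LocallyEpsDeltaDomain

/-- Corkscrew condition for locally uniform domains: if `O ⊆ ℝ^d` is open and locally an
`(ε,δ)`-domain near `N ⊆ ∂O`, then there is `κ ∈ (0,1]` such that for every `x` in the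
closure of `N_{δ/2} ∩ O` and every `r ≤ 1` there is `z ∈ B(x,r)` with
`B(z,κr) ⊆ O ∩ B(x,r)`. -/
theorem corkscrew_of_locallyUniform {d : ℕ} (O N : Set (EuclideanSpace ℝ (Fin d)))
    (hO : IsOpen O) (hN : N ⊆ frontier O) (ε δ : ℝ) (hε : 0 < ε) (hε1 : ε ≤ 1)
    (hδ : 0 < δ) (h : LocallyEpsDeltaDomain O N ε δ) :
    ∃ κ : ℝ, 0 < κ ∧ κ ≤ 1 ∧
      ∀ x ∈ closure (Nbhd N (δ / 2) ∩ O), ∀ r : ℝ, 0 < r → r ≤ 1 →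
        ∃ z ∈ Metric.ball x r, Metric.ball z (κ * r) ⊆ O ∩ Metric.ball x r := by
  obtain ⟨c, hc, hdist⟩ := h.exists_mem_dist_eq hO hN
  set m := min (c / 2) (min (δ / 4) (1 / 2))
  have hm : 0 < m := by positivity
  have hmc : m ≤ c / 2 := min_le_left _ _
  have hmδ : m ≤ δ / 4 := (min_le_right _ _).trans (min_le_left _ _)
  have hm1 : m ≤ 1 / 2 := (min_le_right _ _).trans (min_le_right _ _)
  refine ⟨ε * m / 4, by positivity, by nlinarith, fun x hx r hr hr1 => ?_⟩
  have hρ : 0 < m * r := by positivity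
  have hρm : m * r ≤ m := mul_le_of_le_one_right hm.le hr1
  obtain ⟨x₀, ⟨⟨n, hn, hx₀n⟩, hx₀O⟩, hxx₀⟩ := mem_closure_iff.1 hx (m * r) hρ
  obtain ⟨y, hyO, hx₀y⟩ := hdist x₀ hx₀O n hn hx₀n (m * r) hρ.le (by linarith)
  obtain ⟨z, hx₀z, hzO⟩ :=
    h.exists_ball_subset hO hε hε1 hn hx₀O hx₀n hyO hx₀y hρ (by linarith)
  have hzx : ball z (ε * m / 4 * r) ⊆ ball x r := by
    refine ball_subset_ball' ?_
    nlinarith [dist_triangle z x₀ x, dist_comm x₀ z, dist_comm x x₀]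
  refine ⟨z, hzx (mem_ball_self (by positivity)), subset_inter ?_ hzx⟩
  rwa [show ε * m / 4 * r = ε * (m * r) / 4 by ring]
end

section
/- Let H be a Hilbert space decomposed as an ℓ²-direct sum H ≅ ⊕ᵢ Hᵢ via a topological isomorphism S : u ↦ (Qᵢu)ᵢ, where (Qᵢ) is a family of pairwise orthogonal projections. Let T be a closed densely defined operator in H commuting with each Qᵢ (Qᵢ T ⊆ T Qᵢ), and let Tᵢ be the part of T in Hᵢ = Qᵢ H. Suppose B is a closed operator in H such that Qᵢ B ⊆ B Qᵢ and B Qᵢ* = Bᵢ for closed operators Bᵢ in Hᵢ. Then B u = S^{-1} (Bᵢ Qᵢ u)ᵢ for u ∈ dom(B), and dom(B) = S^{-1}({(uᵢ)ᵢ ∈ ⊕ᵢ Hᵢ : uᵢ ∈ dom(Bᵢ) for all i and Σᵢ ‖Bᵢuᵢ‖² < ∞}). -/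
open scoped InnerProductSpace

/-!
On `dom B` the commutation `Qᵢ B ⊆ B Qᵢ` gives `B Qᵢ u = Qᵢ B u`, so the expansion of `B u` and
its `ℓ²` bound are just those of the vector `B u`. Conversely, if the `B Qᵢ u` are square-summable
they lie in the ranges `Qᵢ H`, hence are the components of some `w`; the partial sums
`(Σ Qᵢ u, Σ B Qᵢ u)` lie in the graph of `B` and converge to `(u, w)`, so closedness of the graph
puts `u` in `dom B`.
-/

theorem LinearPMap.mem_graph_of_hasSum {ι R E F : Type*} [CommRing R] [AddCommGroup E]
    [Module R E] [AddCommGroup F] [Module R F] [TopologicalSpace E] [TopologicalSpace F]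
    (f : E →ₗ.[R] F) (hf : f.IsClosed) {x : ι → f.domain} {u : E} {w : F}
    (hu : HasSum (fun i => (x i : E)) u) (hw : HasSum (fun i => f (x i)) w) :
    (u, w) ∈ f.graph :=
  hf.mem_of_tendsto (hu.prodMk hw) <|
    .of_forall fun _ => Submodule.sum_mem _ fun i _ => f.mem_graph (x i)

theorem closed_operator_l2_decomposition_general {H : Type*} [NormedAddCommGroup H]
    [InnerProductSpace ℂ H] [CompleteSpace H] {ι : Type*}
    (Q : ι → H →L[ℂ] H)
    (hidem : ∀ i, ∀ u, Q i (Q i u) = Q i u)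
    (hsum : ∀ u : H, HasSum (fun i => Q i u) u)
    (c₁ c₂ : ℝ)
    (hiso : ∀ u : H, Summable (fun i => ‖Q i u‖ ^ 2) ∧
      c₁ * ‖u‖ ^ 2 ≤ ∑' i, ‖Q i u‖ ^ 2 ∧ ∑' i, ‖Q i u‖ ^ 2 ≤ c₂ * ‖u‖ ^ 2)
    (hsurj : ∀ v : ι → H, (∀ i, Q i (v i) = v i) →
      Summable (fun i => ‖v i‖ ^ 2) → ∃ u : H, ∀ i, Q i u = v i)
    (B : H →ₗ.[ℂ] H)
    (hclosed : IsClosed (B.graph : Set (H × H)))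
    (hcomm : ∀ i, ∀ u : B.domain, ∃ h : Q i u ∈ B.domain,
      Q i (B u) = B ⟨Q i (u : H), h⟩) :
    (∀ (u : H) (hu : u ∈ B.domain) (hQ : ∀ i, Q i u ∈ B.domain),
      HasSum (fun i => B ⟨Q i u, hQ i⟩) (B ⟨u, hu⟩)) ∧
    (∀ u : H, u ∈ B.domain ↔
      ∃ h : ∀ i, Q i u ∈ B.domain, Summable fun i => ‖B ⟨Q i u, h i⟩‖ ^ 2) := by
  have hBQ : ∀ i (u : B.domain) (h : Q i u ∈ B.domain), B ⟨Q i u, h⟩ = Q i (B u) :=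
    fun i u _ => (hcomm i u).2.symm
  refine ⟨fun u hu hQ => ?_, fun u => ⟨fun hu => ?_, ?_⟩⟩
  · simpa only [hBQ _ ⟨u, hu⟩] using hsum (B ⟨u, hu⟩)
  · refine ⟨fun i => (hcomm i ⟨u, hu⟩).1, ?_⟩
    simpa only [hBQ _ ⟨u, hu⟩] using (hiso (B ⟨u, hu⟩)).1
  · rintro ⟨hQ, hsumm⟩
    set x : ι → B.domain := fun i => ⟨Q i u, hQ i⟩
    have hrange : ∀ i, Q i (B (x i)) = B (x i) := fun i => by
      rw [← hBQ i (x i) (by simpa only [x, hidem] using hQ i)]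
      simp only [x, hidem]
    obtain ⟨w, hw⟩ := hsurj _ hrange hsumm
    have hBx : HasSum (fun i => B (x i)) w := by simpa only [hw] using hsum w
    exact B.mem_domain_of_mem_graph (B.mem_graph_of_hasSum hclosed (hsum u) hBx)

/-- Decomposition of a closed operator along an `ℓ²`-decomposition of a Hilbert space:
let `(Qᵢ)` be pairwise orthogonal projections on `H` decomposing `H` as the `ℓ²`-sum of
the subspaces `Hᵢ = Qᵢ H` via the topological isomorphism `S : u ↦ (Qᵢ u)ᵢ`, and let `B`
be a closed densely defined operator commuting with every `Qᵢ` (`Qᵢ B ⊆ B Qᵢ`), with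
parts `Bᵢ = B Qᵢ*` in `Hᵢ`. Then `B u = S⁻¹ (Bᵢ Qᵢ u)ᵢ` on `dom B` (i.e. `B u` is the
`ℓ²`-sum of the `Bᵢ Qᵢ u`), and `dom B` consists exactly of those `u` with `Qᵢ u ∈ dom Bᵢ`
for all `i` and `Σᵢ ‖Bᵢ Qᵢ u‖² < ∞`. -/
theorem closed_operator_l2_decomposition {H : Type*} [NormedAddCommGroup H]
    [InnerProductSpace ℂ H] [CompleteSpace H] {ι : Type*} [Countable ι]
    (Q : ι → H →L[ℂ] H)
    (hidem : ∀ i, ∀ u, Q i (Q i u) = Q i u)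
    (hsa : ∀ i, ∀ u v, ⟪Q i u, v⟫_ℂ = ⟪u, Q i v⟫_ℂ)
    (hpair : ∀ i j, i ≠ j → ∀ u, Q i (Q j u) = 0)
    (hsum : ∀ u : H, HasSum (fun i => Q i u) u)
    (c₁ c₂ : ℝ) (hc₁ : 0 < c₁) (hc₂ : 0 < c₂)
    (hiso : ∀ u : H, Summable (fun i => ‖Q i u‖ ^ 2) ∧
      c₁ * ‖u‖ ^ 2 ≤ ∑' i, ‖Q i u‖ ^ 2 ∧ ∑' i, ‖Q i u‖ ^ 2 ≤ c₂ * ‖u‖ ^ 2)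
    (hsurj : ∀ v : ι → H, (∀ i, Q i (v i) = v i) →
      Summable (fun i => ‖v i‖ ^ 2) → ∃ u : H, ∀ i, Q i u = v i)
    (B : H →ₗ.[ℂ] H)
    (hdense : Dense (B.domain : Set H))
    (hclosed : IsClosed (B.graph : Set (H × H)))
    (hcomm : ∀ i, ∀ u : B.domain, ∃ h : Q i u ∈ B.domain,
      Q i (B u) = B ⟨Q i (u : H), h⟩) :
    (∀ (u : H) (hu : u ∈ B.domain) (hQ : ∀ i, Q i u ∈ B.domain),
      HasSum (fun i => B ⟨Q i u, hQ i⟩) (B ⟨u, hu⟩)) ∧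
    (∀ u : H, u ∈ B.domain ↔
      ∃ h : ∀ i, Q i u ∈ B.domain, Summable fun i => ‖B ⟨Q i u, h i⟩‖ ^ 2) :=
  closed_operator_l2_decomposition_general Q hidem hsum c₁ c₂ hiso hsurj B hclosed hcomm
end

section
/- Kato's second representation theorem consequence (the self-adjoint Kato estimate): Let a : V × V → ℂ be a sesquilinear form on a Hilbert space V densely and continuously embedded in a Hilbert space H, which is bounded, symmetric (a(u,v) = conj(a(v,u))) and coercive: Re a(u,u) ≥ λ‖u‖_V² for some λ > 0. Let L be the associated self-adjoint operator in H. Then dom(√L) = V and ‖√L u‖_H² = a(u,u) ≈ ‖u‖_V² for all u ∈ V. -/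
/-!
By Lax–Milgram, `L` and `1 + L` map `dom L` onto `H`; together with the injectivity of `e` this
makes `E = e⁻¹(dom L)` dense in `V`. For `u ∈ E`, self-adjointness of `√L` gives
`‖√L (e u)‖² = ⟪e u, L (e u)⟫ = a(u, u) ≤ M ‖u‖²`, so, `√L` being closed, `√L ∘ e` extends
from `E` to a bounded operator on all of `V`, and the identity persists by continuity.
Conversely, for `x ∈ dom √L`, Lax–Milgram for the form `a(u, w) + ⟪e w, e u⟫` yields `v ∈ V`
with `e v - x` orthogonal to the range of `1 + L`, which is all of `H`; hence `x = e v`.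
-/

open RCLike InnerProductSpace

section LaxMilgram

variable {𝕜 V H : Type*} [RCLike 𝕜] [NormedAddCommGroup V] [InnerProductSpace 𝕜 V]
  [NormedAddCommGroup H] [InnerProductSpace 𝕜 H] {B : V →L⋆[𝕜] V →L[𝕜] 𝕜}

def IsCoerciveForm (B : V →L⋆[𝕜] V →L[𝕜] 𝕜) : Prop :=
  ∃ c, 0 < c ∧ ∀ v, c * ‖v‖ ^ 2 ≤ re (B v v)

theorem IsCoerciveForm.add_inner_comp (hB : IsCoerciveForm B) (e : V →L[𝕜] H) :
    IsCoerciveForm (B + (innerSL 𝕜).bilinearComp e e) := by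
  obtain ⟨c, hc, hcB⟩ := hB
  refine ⟨c, hc, fun v => ?_⟩
  simp only [add_apply, ContinuousLinearMap.bilinearComp_apply, innerSL_apply_apply, map_add,
    inner_self_eq_norm_sq]
  linarith [hcB v, sq_nonneg ‖e v‖]

theorem conj_add_inner_comp_apply (hBs : ∀ v w, starRingEnd 𝕜 (B v w) = B w v)
    (e : V →L[𝕜] H) (v w : V) :
    starRingEnd 𝕜 ((B + (innerSL 𝕜).bilinearComp e e) v w) =
      (B + (innerSL 𝕜).bilinearComp e e) w v := by
  simp [← hBs v w]

variable [CompleteSpace V]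

theorem IsCoerciveForm.surjective_continuousLinearMapOfBilin (hB : IsCoerciveForm B) :
    Function.Surjective (continuousLinearMapOfBilin B) := by
  obtain ⟨c, hc, hcB⟩ := hB
  set A := continuousLinearMapOfBilin B
  have hA : ∀ v, c * ‖v‖ ^ 2 ≤ re ⟪A v, v⟫_𝕜 := by simpa [A] using hcB
  have hbelow : ∀ v, ‖v‖ ≤ c⁻¹ * ‖A v‖ := fun v => by
    rcases (norm_nonneg v).eq_or_lt with hv | hv
    · rw [← hv]; positivity
    · rw [le_inv_mul_iff₀ hc, ← mul_le_mul_iff_left₀ hv]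
      calc c * ‖v‖ * ‖v‖ = c * ‖v‖ ^ 2 := by ring
        _ ≤ re ⟪A v, v⟫_𝕜 := hA v
        _ ≤ ‖A v‖ * ‖v‖ := re_inner_le_norm _ _
  have hclosed : IsClosed (Set.range A) :=
    (A.antilipschitz_of_bound (K := c⁻¹.toNNReal) (by simpa [hc.le] using hbelow)).isClosed_range
      A.uniformContinuous
  have horth : (LinearMap.range A.toLinearMap)ᗮ = ⊥ := by
    refine (Submodule.eq_bot_iff _).2 fun z hz => ?_
    have hAz : ⟪A z, z⟫_𝕜 = 0 :=
      Submodule.inner_right_of_mem_orthogonal (LinearMap.mem_range_self _ z) hz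
    have := hA z
    rw [hAz, map_zero] at this
    exact norm_eq_zero.1 (pow_eq_zero_iff two_ne_zero |>.1
      (le_antisymm (nonpos_of_mul_nonpos_right this hc) (by positivity)))
  refine (LinearMap.range_eq_top (f := A.toLinearMap)).1 ?_
  rw [← Submodule.topologicalClosure_eq_top_iff.2 horth]
  exact (IsClosed.submodule_topologicalClosure_eq (s := LinearMap.range A.toLinearMap) hclosed).symm

theorem IsCoerciveForm.surjective (hB : IsCoerciveForm B) : Function.Surjective B := fun φ => by
  obtain ⟨v, hv⟩ := hB.surjective_continuousLinearMapOfBilin ((toDual 𝕜 V).symm φ)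
  refine ⟨v, ?_⟩
  simpa [continuousLinearMapOfBilin] using hv

theorem IsCoerciveForm.exists_forall_apply_eq_inner {e : V →L[𝕜] H} (hB : IsCoerciveForm B)
    (hBs : ∀ v w, starRingEnd 𝕜 (B v w) = B w v) (f : H) : ∃ v, ∀ w, B w v = ⟪e w, f⟫_𝕜 := by
  obtain ⟨v, hv⟩ := hB.surjective ((innerSL 𝕜 f).comp e)
  refine ⟨v, fun w => ?_⟩
  rw [← hBs v w]
  simp [hv]

end LaxMilgram

-- Mathlib's sesquilinear forms are conjugate-linear in the first argument, hence the swap.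
theorem exists_sesqForm_apply_eq {𝕜 V : Type*} [RCLike 𝕜] [NormedAddCommGroup V]
    [InnerProductSpace 𝕜 V] (a : V → V → 𝕜)
    (hadd : ∀ u v w : V, a (u + v) w = a u w + a v w)
    (hsmul : ∀ (z : 𝕜) (u v : V), a (z • u) v = z * a u v)
    (hsymm : ∀ u v : V, a u v = starRingEnd 𝕜 (a v u))
    {M : ℝ} (hbdd : ∀ u v : V, ‖a u v‖ ≤ M * ‖u‖ * ‖v‖) :
    ∃ B : V →L⋆[𝕜] V →L[𝕜] 𝕜, ∀ v w, B v w = a w v := by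
  have hadd' : ∀ u v w : V, a w (u + v) = a w u + a w v := fun u v w => by
    rw [hsymm, hadd, map_add, ← hsymm, ← hsymm]
  have hsmul' : ∀ (z : 𝕜) (u v : V), a v (z • u) = starRingEnd 𝕜 z * a v u := fun z u v => by
    rw [hsymm, hsmul, map_mul, ← hsymm]
  refine ⟨LinearMap.mkContinuous₂
    (LinearMap.mk₂'ₛₗ (starRingEnd 𝕜) (RingHom.id 𝕜) (fun v w => a w v) hadd' hsmul'
      (fun v w w' => hadd w w' v) (fun z v w => hsmul z w v)) M
    (fun v w => (hbdd w v).trans_eq (by ring)), fun v w => rfl⟩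

namespace LinearPMap

theorem isClosed_of_inner_eq {𝕜 E : Type*} [RCLike 𝕜] [NormedAddCommGroup E]
    [InnerProductSpace 𝕜 E] {T : E →ₗ.[𝕜] E}
    (hsymm : ∀ u v : T.domain, ⟪T u, (v : E)⟫_𝕜 = ⟪(u : E), T v⟫_𝕜)
    (hmax : ∀ v w : E, (∀ u : T.domain, ⟪T u, v⟫_𝕜 = ⟪(u : E), w⟫_𝕜) →
      ∃ hv : v ∈ T.domain, T ⟨v, hv⟩ = w) :
    T.IsClosed := by
  have hgraph : (T.graph : Set (E × E)) =
      ⋂ u : T.domain, {p | ⟪T u, p.1⟫_𝕜 = ⟪(u : E), p.2⟫_𝕜} := by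
    ext ⟨v, w⟩
    simp only [SetLike.mem_coe, mem_graph_iff, Set.mem_iInter, Set.mem_ofPred_eq]
    constructor
    · rintro ⟨y, rfl, rfl⟩ u
      exact hsymm u y
    · intro h
      obtain ⟨hv, hTv⟩ := hmax v w h
      exact ⟨⟨v, hv⟩, rfl, hTv⟩
  rw [LinearPMap.IsClosed, hgraph]
  exact isClosed_iInter fun u => isClosed_eq (by fun_prop) (by fun_prop)

theorem exists_clm_apply_eq_of_isClosed {𝕜 V X Y : Type*} [NontriviallyNormedField 𝕜]
    [NormedAddCommGroup V] [NormedSpace 𝕜 V] [NormedAddCommGroup X] [NormedSpace 𝕜 X]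
    [NormedAddCommGroup Y] [NormedSpace 𝕜 Y] [CompleteSpace Y]
    {T : X →ₗ.[𝕜] Y} (hT : T.IsClosed) (f : V →L[𝕜] X) {E : Submodule 𝕜 V}
    (hdense : Dense (E : Set V)) (hE : ∀ u ∈ E, f u ∈ T.domain) {C : ℝ}
    (hC : ∀ u (hu : u ∈ E), ‖T ⟨f u, hE u hu⟩‖ ≤ C * ‖u‖) :
    ∃ S : V →L[𝕜] Y, ∀ v, ∃ h : f v ∈ T.domain, T ⟨f v, h⟩ = S v := by
  let S₀ : E →L[𝕜] Y :=
    (T.toFun ∘ₗ f.toLinearMap.restrict hE).mkContinuous C fun u => hC u u.2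
  set S := S₀.extend E.subtypeL
  have hS₀ : ∀ u : E, S u = T ⟨f u, hE u u.2⟩ :=
    S₀.extend_eq hdense.denseRange_val isUniformEmbedding_subtype_val.isUniformInducing
  have hgraph : ∀ v, (f v, S v) ∈ T.graph :=
    isClosed_property hdense.denseRange_val (hT.preimage (by fun_prop))
      fun u => by simpa [hS₀ u] using T.mem_graph ⟨f u, hE u u.2⟩
  refine ⟨S, fun v => ?_⟩
  obtain ⟨⟨x, hx⟩, rfl, hTx⟩ := T.mem_graph_iff.1 (hgraph v)
  exact ⟨hx, hTx⟩

theorem inner_apply_apply_eq {𝕜 E : Type*} [RCLike 𝕜] [NormedAddCommGroup E]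
    [InnerProductSpace 𝕜 E] {T L : E →ₗ.[𝕜] E}
    (hsymm : ∀ u v : T.domain, ⟪T u, (v : E)⟫_𝕜 = ⟪(u : E), T v⟫_𝕜)
    (hLT : ∀ x (hx : x ∈ L.domain), ∃ (h₁ : x ∈ T.domain) (h₂ : T ⟨x, h₁⟩ ∈ T.domain),
      T ⟨T ⟨x, h₁⟩, h₂⟩ = L ⟨x, hx⟩)
    (y : T.domain) {x : E} (hx : x ∈ L.domain) (h : x ∈ T.domain) :
    ⟪T y, T ⟨x, h⟩⟫_𝕜 = ⟪(y : E), L ⟨x, hx⟩⟫_𝕜 := by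
  obtain ⟨_, h₂, hTTx⟩ := hLT x hx
  rw [← hTTx]
  exact hsymm y ⟨_, h₂⟩

end LinearPMap

section AssociatedOperator

variable {𝕜 V H : Type*} [RCLike 𝕜] [NormedAddCommGroup V] [InnerProductSpace 𝕜 V]
  [NormedAddCommGroup H] [InnerProductSpace 𝕜 H]
  {e : V →L[𝕜] H} {B : V →L⋆[𝕜] V →L[𝕜] 𝕜}

variable (e B) in
def IsAssociatedOperator (L : H →ₗ.[𝕜] H) : Prop :=
  ∀ x f : H, (∃ hx : x ∈ L.domain, L ⟨x, hx⟩ = f) ↔ ∃ v : V, e v = x ∧ ∀ w : V, B w v = ⟪e w, f⟫_𝕜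

namespace IsAssociatedOperator

variable {L T : H →ₗ.[𝕜] H}

theorem apply_eq_inner (hL : IsAssociatedOperator e B L) (hinj : Function.Injective e) {v : V}
    (hv : e v ∈ L.domain) (w : V) : B w v = ⟪e w, L ⟨e v, hv⟩⟫_𝕜 := by
  obtain ⟨v', hv', hBv'⟩ := (hL (e v) _).1 ⟨hv, rfl⟩
  obtain rfl := hinj hv'
  exact hBv' w

theorem exists_apply_eq [CompleteSpace V] (hL : IsAssociatedOperator e B L)
    (hB : IsCoerciveForm B) (hBs : ∀ v w, starRingEnd 𝕜 (B v w) = B w v) (f : H) :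
    ∃ (v : V) (hv : e v ∈ L.domain), L ⟨e v, hv⟩ = f := by
  obtain ⟨v, hv⟩ := hB.exists_forall_apply_eq_inner hBs f
  obtain ⟨hev, hLv⟩ := (hL (e v) f).2 ⟨v, rfl, hv⟩
  exact ⟨v, hev, hLv⟩

theorem exists_add_apply_eq [CompleteSpace V] (hL : IsAssociatedOperator e B L)
    (hB : IsCoerciveForm B) (hBs : ∀ v w, starRingEnd 𝕜 (B v w) = B w v) (f : H) :
    ∃ (v : V) (hv : e v ∈ L.domain), e v + L ⟨e v, hv⟩ = f := by
  obtain ⟨v, hv⟩ := (hB.add_inner_comp e).exists_forall_apply_eq_inner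
    (conj_add_inner_comp_apply hBs e) f
  have hBv : ∀ w, B w v = ⟪e w, f - e v⟫_𝕜 := fun w => by
    rw [inner_sub_right, ← hv w]
    simp
  obtain ⟨hev, hLv⟩ := (hL (e v) _).2 ⟨v, rfl, hBv⟩
  exact ⟨v, hev, by rw [hLv, add_sub_cancel]⟩

theorem dense_comap_domain [CompleteSpace V] (hL : IsAssociatedOperator e B L)
    (hinj : Function.Injective e) (hB : IsCoerciveForm B)
    (hBs : ∀ v w, starRingEnd 𝕜 (B v w) = B w v) :
    Dense (L.domain.comap e.toLinearMap : Set V) := by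
  refine Submodule.dense_iff_topologicalClosure_eq_top.2
    (Submodule.topologicalClosure_eq_top_iff.2 ((Submodule.eq_bot_iff _).2 fun z hz => ?_))
  obtain ⟨w, hw⟩ := hB.surjective (toDual 𝕜 V z)
  obtain ⟨d, hd, hLd⟩ := hL.exists_apply_eq hB hBs (e w)
  have hew : ⟪e w, e w⟫_𝕜 = 0 := by
    have hBwd := hL.apply_eq_inner hinj hd w
    rw [hLd] at hBwd
    rw [← hBwd, hw]
    exact (Submodule.mem_orthogonal' _ z).1 hz d hd
  have hw0 : w = 0 := hinj (by rw [inner_self_eq_zero.1 hew, map_zero])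
  rw [hw0, map_zero] at hw
  exact (toDual 𝕜 V).map_eq_zero_iff.1 hw.symm

theorem exists_clm_apply_eq [CompleteSpace V] [CompleteSpace H] (hL : IsAssociatedOperator e B L)
    (hinj : Function.Injective e) (hB : IsCoerciveForm B)
    (hBs : ∀ v w, starRingEnd 𝕜 (B v w) = B w v) (hT : T.IsClosed)
    (hsymm : ∀ u v : T.domain, ⟪T u, (v : H)⟫_𝕜 = ⟪(u : H), T v⟫_𝕜)
    (hLT : ∀ x (hx : x ∈ L.domain), ∃ (h₁ : x ∈ T.domain) (h₂ : T ⟨x, h₁⟩ ∈ T.domain),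
      T ⟨T ⟨x, h₁⟩, h₂⟩ = L ⟨x, hx⟩) :
    ∃ S : V →L[𝕜] H, ∀ v, (∃ h : e v ∈ T.domain, T ⟨e v, h⟩ = S v) ∧ ‖S v‖ ^ 2 = re (B v v) := by
  have hdom : ∀ u ∈ L.domain.comap e.toLinearMap, e u ∈ T.domain := fun u hu => (hLT _ hu).1
  have hnorm : ∀ u (hu : e u ∈ L.domain) (h : e u ∈ T.domain),
      ‖T ⟨e u, h⟩‖ ^ 2 = re (B u u) := fun u hu h => by
    rw [← inner_self_eq_norm_sq (𝕜 := 𝕜), T.inner_apply_apply_eq hsymm hLT ⟨e u, h⟩ hu h,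
      ← hL.apply_eq_inner hinj hu]
  have hbound : ∀ u (hu : e u ∈ L.domain), ‖T ⟨e u, hdom u hu⟩‖ ≤ √‖B‖ * ‖u‖ := fun u hu => by
    refine le_of_pow_le_pow_left₀ two_ne_zero (by positivity) ?_
    rw [mul_pow, Real.sq_sqrt (norm_nonneg B), hnorm u hu]
    calc re (B u u) ≤ ‖B u u‖ := re_le_norm _
      _ ≤ ‖B‖ * ‖u‖ * ‖u‖ := B.le_opNorm₂ u u
      _ = ‖B‖ * ‖u‖ ^ 2 := by ring
  have hdense := hL.dense_comap_domain hinj hB hBs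
  obtain ⟨S, hS⟩ := T.exists_clm_apply_eq_of_isClosed hT e hdense hdom hbound
  refine ⟨S, fun v => ⟨hS v, congrFun (?_ : (fun v => ‖S v‖ ^ 2) = fun v => re (B v v)) v⟩⟩
  refine Continuous.ext_on hdense (by fun_prop) (by fun_prop) fun u hu => ?_
  obtain ⟨h, hSu⟩ := hS u
  simp only [← hSu, hnorm u hu h]

theorem exists_eq_of_mem_domain [CompleteSpace V] (hL : IsAssociatedOperator e B L)
    (hinj : Function.Injective e) (hB : IsCoerciveForm B)
    (hBs : ∀ v w, starRingEnd 𝕜 (B v w) = B w v)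
    (hsymm : ∀ u v : T.domain, ⟪T u, (v : H)⟫_𝕜 = ⟪(u : H), T v⟫_𝕜)
    (hLT : ∀ x (hx : x ∈ L.domain), ∃ (h₁ : x ∈ T.domain) (h₂ : T ⟨x, h₁⟩ ∈ T.domain),
      T ⟨T ⟨x, h₁⟩, h₂⟩ = L ⟨x, hx⟩)
    {S : V →L[𝕜] H} (hS : ∀ v, ∃ h : e v ∈ T.domain, T ⟨e v, h⟩ = S v)
    {x : H} (hx : x ∈ T.domain) : ∃ v, e v = x := by
  obtain ⟨v, hv⟩ := (hB.add_inner_comp e).surjective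
    ((innerSL 𝕜 x).comp e + (innerSL 𝕜 (T ⟨x, hx⟩)).comp S)
  have horth : ∀ w (hw : e w ∈ L.domain), ⟪e v - x, e w + L ⟨e w, hw⟩⟫_𝕜 = 0 := by
    intro w hw
    obtain ⟨h, hSw⟩ := hS w
    have hvw := congrFun (congrArg DFunLike.coe hv) w
    simp only [add_apply, ContinuousLinearMap.bilinearComp_apply,
      innerSL_apply_apply, ContinuousLinearMap.comp_apply] at hvw
    rw [← hSw, T.inner_apply_apply_eq hsymm hLT ⟨x, hx⟩ hw h, hL.apply_eq_inner hinj hw] at hvw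
    rw [inner_sub_left, inner_add_right, inner_add_right]
    linear_combination hvw
  obtain ⟨w, hw, hwx⟩ := hL.exists_add_apply_eq hB hBs (e v - x)
  have := horth w hw
  rw [hwx, inner_self_eq_zero, sub_eq_zero] at this
  exact ⟨v, this⟩

end IsAssociatedOperator

end AssociatedOperator

theorem kato_selfadjoint_general {V H : Type*}
    [NormedAddCommGroup V] [InnerProductSpace ℂ V] [CompleteSpace V]
    [NormedAddCommGroup H] [InnerProductSpace ℂ H] [CompleteSpace H]
    (e : V →L[ℂ] H) (hinj : Function.Injective e)
    (a : V → V → ℂ)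
    (hadd₁ : ∀ u v w : V, a (u + v) w = a u w + a v w)
    (hsmul₁ : ∀ (z : ℂ) (u v : V), a (z • u) v = z * a u v)
    (hsymm : ∀ u v : V, a u v = starRingEnd ℂ (a v u))
    (M : ℝ) (hM : 0 < M) (hbdd : ∀ u v : V, ‖a u v‖ ≤ M * ‖u‖ * ‖v‖)
    (lam : ℝ) (hlam : 0 < lam) (hcoercive : ∀ u : V, lam * ‖u‖ ^ 2 ≤ (a u u).re)
    (L : H →ₗ.[ℂ] H)
    (hL : ∀ x f : H, (∃ hx : x ∈ L.domain, L ⟨x, hx⟩ = f) ↔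
      ∃ v : V, e v = x ∧ ∀ w : V, a v w = ⟪e w, f⟫_ℂ)
    (Rt : H →ₗ.[ℂ] H)
    (hRtsymm : ∀ u v : Rt.domain, ⟪Rt u, (v : H)⟫_ℂ = ⟪(u : H), Rt v⟫_ℂ)
    (hRtmax : ∀ v w : H, (∀ u : Rt.domain, ⟪Rt u, v⟫_ℂ = ⟪(u : H), w⟫_ℂ) →
      ∃ hv : v ∈ Rt.domain, Rt ⟨v, hv⟩ = w)
    (hsq_dom : ∀ x : H, x ∈ L.domain ↔
      ∃ h : x ∈ Rt.domain, Rt ⟨x, h⟩ ∈ Rt.domain)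
    (hsq : ∀ (x : H) (hx : x ∈ L.domain) (h₁ : x ∈ Rt.domain)
      (h₂ : Rt ⟨x, h₁⟩ ∈ Rt.domain), Rt ⟨Rt ⟨x, h₁⟩, h₂⟩ = L ⟨x, hx⟩) :
    (∀ x : H, x ∈ Rt.domain ↔ ∃ v : V, e v = x) ∧
    (∀ (v : V) (h : e v ∈ Rt.domain), a v v = ((‖Rt ⟨e v, h⟩‖ ^ 2 : ℝ) : ℂ)) ∧
    ∃ c₁ c₂ : ℝ, 0 < c₁ ∧ 0 < c₂ ∧ ∀ (v : V) (h : e v ∈ Rt.domain),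
      c₁ * ‖v‖ ^ 2 ≤ ‖Rt ⟨e v, h⟩‖ ^ 2 ∧ ‖Rt ⟨e v, h⟩‖ ^ 2 ≤ c₂ * ‖v‖ ^ 2 := by
  have hreal : ∀ v, a v v = ((a v v).re : ℂ) := fun v =>
    (Complex.conj_eq_iff_re.1 (hsymm v v).symm).symm
  obtain ⟨B, hBa⟩ := exists_sesqForm_apply_eq a hadd₁ hsmul₁ hsymm hbdd
  have hB : IsCoerciveForm B := ⟨lam, hlam, fun v => by simpa [hBa] using hcoercive v⟩
  have hBs : ∀ v w, starRingEnd ℂ (B v w) = B w v := fun v w => by simp [hBa, hsymm w v]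
  have hL' : IsAssociatedOperator e B L := by simpa only [IsAssociatedOperator, hBa] using hL
  have hLT : ∀ x (hx : x ∈ L.domain), ∃ (h₁ : x ∈ Rt.domain) (h₂ : Rt ⟨x, h₁⟩ ∈ Rt.domain),
      Rt ⟨Rt ⟨x, h₁⟩, h₂⟩ = L ⟨x, hx⟩ := fun x hx => by
    obtain ⟨h₁, h₂⟩ := (hsq_dom x).1 hx
    exact ⟨h₁, h₂, hsq x hx h₁ h₂⟩
  obtain ⟨S, hS⟩ := hL'.exists_clm_apply_eq hinj hB hBs
    (LinearPMap.isClosed_of_inner_eq hRtsymm hRtmax) hRtsymm hLT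
  have hnorm : ∀ v (h : e v ∈ Rt.domain), ‖Rt ⟨e v, h⟩‖ ^ 2 = (a v v).re := fun v h => by
    obtain ⟨⟨_, hSv⟩, hnormS⟩ := hS v
    rw [hSv, hnormS, hBa, RCLike.re_to_complex]
  refine ⟨fun x => ⟨fun hx => ?_, ?_⟩, fun v h => ?_, lam, M, hlam, hM, fun v h => ?_⟩
  · exact hL'.exists_eq_of_mem_domain hinj hB hBs hRtsymm hLT (fun v => (hS v).1) hx
  · rintro ⟨v, rfl⟩
    exact (hS v).1.1
  · rw [hreal v, hnorm v h]
  · rw [hnorm v h]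
    refine ⟨hcoercive v, ?_⟩
    calc (a v v).re ≤ ‖a v v‖ := Complex.re_le_norm _
      _ ≤ M * ‖v‖ * ‖v‖ := hbdd v v
      _ = M * ‖v‖ ^ 2 := by ring

/-- Kato's second representation theorem / the self-adjoint Kato estimate: let `V` be a
Hilbert space densely and continuously embedded (via `e`) in a Hilbert space `H`, and
let `a : V × V → ℂ` be a bounded, symmetric, coercive sesquilinear form with associated
self-adjoint operator `L` in `H` (`u ∈ dom L, Lu = f` iff `a(u,v) = (f|v)_H` for all
`v ∈ V`). If `Rt` is the nonnegative self-adjoint square root `√L` of `L`, then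
`dom √L = V` and `‖√L u‖² = a(u,u) ≈ ‖u‖_V²` for all `u ∈ V`. -/
theorem kato_selfadjoint {V H : Type*}
    [NormedAddCommGroup V] [InnerProductSpace ℂ V] [CompleteSpace V]
    [NormedAddCommGroup H] [InnerProductSpace ℂ H] [CompleteSpace H]
    (e : V →L[ℂ] H) (hinj : Function.Injective e) (hdense : DenseRange e)
    (a : V → V → ℂ)
    (hadd₁ : ∀ u v w : V, a (u + v) w = a u w + a v w)
    (hsmul₁ : ∀ (z : ℂ) (u v : V), a (z • u) v = z * a u v)
    (hsymm : ∀ u v : V, a u v = starRingEnd ℂ (a v u))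
    (M : ℝ) (hM : 0 < M) (hbdd : ∀ u v : V, ‖a u v‖ ≤ M * ‖u‖ * ‖v‖)
    (lam : ℝ) (hlam : 0 < lam) (hcoercive : ∀ u : V, lam * ‖u‖ ^ 2 ≤ (a u u).re)
    (L : H →ₗ.[ℂ] H)
    (hL : ∀ x f : H, (∃ hx : x ∈ L.domain, L ⟨x, hx⟩ = f) ↔
      ∃ v : V, e v = x ∧ ∀ w : V, a v w = ⟪e w, f⟫_ℂ)
    (Rt : H →ₗ.[ℂ] H)
    (hRtdense : Dense (Rt.domain : Set H))
    (hRtsymm : ∀ u v : Rt.domain, ⟪Rt u, (v : H)⟫_ℂ = ⟪(u : H), Rt v⟫_ℂ)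
    (hRtmax : ∀ v w : H, (∀ u : Rt.domain, ⟪Rt u, v⟫_ℂ = ⟪(u : H), w⟫_ℂ) →
      ∃ hv : v ∈ Rt.domain, Rt ⟨v, hv⟩ = w)
    (hRtpos : ∀ u : Rt.domain, 0 ≤ (⟪Rt u, (u : H)⟫_ℂ).re)
    (hsq_dom : ∀ x : H, x ∈ L.domain ↔
      ∃ h : x ∈ Rt.domain, Rt ⟨x, h⟩ ∈ Rt.domain)
    (hsq : ∀ (x : H) (hx : x ∈ L.domain) (h₁ : x ∈ Rt.domain)
      (h₂ : Rt ⟨x, h₁⟩ ∈ Rt.domain), Rt ⟨Rt ⟨x, h₁⟩, h₂⟩ = L ⟨x, hx⟩) :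
    (∀ x : H, x ∈ Rt.domain ↔ ∃ v : V, e v = x) ∧
    (∀ (v : V) (h : e v ∈ Rt.domain), a v v = ((‖Rt ⟨e v, h⟩‖ ^ 2 : ℝ) : ℂ)) ∧
    ∃ c₁ c₂ : ℝ, 0 < c₁ ∧ 0 < c₂ ∧ ∀ (v : V) (h : e v ∈ Rt.domain),
      c₁ * ‖v‖ ^ 2 ≤ ‖Rt ⟨e v, h⟩‖ ^ 2 ∧ ‖Rt ⟨e v, h⟩‖ ^ 2 ≤ c₂ * ‖v‖ ^ 2 :=
  kato_selfadjoint_general e hinj a hadd₁ hsmul₁ hsymm M hM hbdd lam hlam hcoercive L hL Rt hRtsymm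
    hRtmax hsq_dom hsq
end

section
/- In an open set O ⊆ ℝ^d, every set of the form ∂Q \ O for Q a cube of a fixed grid intersecting the closure of the complement appropriately satisfies: the boundary decomposition ∂(O ∪ ⋃_{Q∈Σ'} (Q \ ∂O)) = ∂O ∪ ⋃_{Q∈Σ'}(∂Q \ O), where Σ' is a collection of open grid cubes, each Q ∈ Σ' satisfying Q ∩ N_{δ/4} = ∅ and cl(Q) ∩ D ≠ ∅, and the cubes of the grid Σ have diameter δ/8. In particular, setting 𝐎 = O ∪ ⋃_{Q∈Σ'}(Q \ ∂O), one has 𝐎 \ O open and ∂O ⊆ ∂𝐎. -/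
/-- `Q` is an open axis-parallel cube with lower corner `a` and side length `l`. -/
def IsCube {d : ℕ} (Q : Set (EuclideanSpace ℝ (Fin d))) : Prop :=
  ∃ (a : Fin d → ℝ) (l : ℝ), 0 < l ∧
    Q = {x : EuclideanSpace ℝ (Fin d) | ∀ i, a i < x i ∧ x i < a i + l}

open Set Metric

/-- The set `𝐎 = O ∪ ⋃_{Q ∈ 𝒬} (Q \ ∂O)` of the fattening construction. -/
def fatten {X : Type*} [TopologicalSpace X] (O : Set X) (𝒬 : Set (Set X)) : Set X :=
  O ∪ ⋃ Q ∈ 𝒬, (Q \ frontier O)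

section Fatten

variable {X : Type*} [TopologicalSpace X] {O : Set X} {𝒬 : Set (Set X)}

theorem mem_fatten {x : X} : x ∈ fatten O 𝒬 ↔ x ∈ O ∨ ∃ Q ∈ 𝒬, x ∈ Q ∧ x ∉ frontier O := by
  simp only [fatten, mem_union, mem_iUnion, mem_sdiff, exists_prop]

theorem IsOpen.closure_diff_frontier {U : Set X} (hO : IsOpen O) (hU : IsOpen U) :
    closure (U \ frontier O) = closure U := by
  have hdense : Dense (frontier O)ᶜ :=
    interior_eq_empty_iff_dense_compl.mp (frontier_compl O ▸ interior_frontier hO.isClosed_compl)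
  exact (closure_mono sdiff_subset).antisymm <|
    closure_minimal (hdense.open_subset_closure_inter hU) isClosed_closure

theorem closure_fatten (hO : IsOpen O) (hopen : ∀ Q ∈ 𝒬, IsOpen Q)
    (hlf : LocallyFinite ((↑) : 𝒬 → Set X)) :
    closure (fatten O 𝒬) = closure O ∪ ⋃ Q ∈ 𝒬, closure Q := by
  have hlf' : LocallyFinite fun Q : 𝒬 => (Q : Set X) \ frontier O :=
    hlf.subset fun _ => sdiff_subset
  rw [fatten, closure_union, biUnion_eq_iUnion, hlf'.closure_iUnion, biUnion_eq_iUnion]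
  exact congrArg _ (iUnion_congr fun Q => hO.closure_diff_frontier (hopen Q Q.2))

theorem isOpen_fatten (hO : IsOpen O) (hopen : ∀ Q ∈ 𝒬, IsOpen Q) : IsOpen (fatten O 𝒬) :=
  hO.union <| isOpen_biUnion fun Q hQ => (hopen Q hQ).sdiff isClosed_frontier

theorem fatten_diff_self : fatten O 𝒬 \ O = ⋃ Q ∈ 𝒬, (Q \ closure O) := by
  simp only [fatten, union_sdiff_left, iUnion_sdiff, sdiff_sdiff, closure_eq_self_union_frontier,
    union_comm (frontier O)]

theorem isOpen_fatten_diff_self (hopen : ∀ Q ∈ 𝒬, IsOpen Q) : IsOpen (fatten O 𝒬 \ O) :=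
  fatten_diff_self (O := O) ▸ isOpen_biUnion fun Q hQ => (hopen Q hQ).sdiff isClosed_closure

theorem frontier_fatten (hO : IsOpen O) (hopen : ∀ Q ∈ 𝒬, IsOpen Q)
    (hlf : LocallyFinite ((↑) : 𝒬 → Set X))
    (hbd : ∀ Q ∈ 𝒬, ∀ Q' ∈ 𝒬, frontier Q ∩ Q' = ∅) :
    frontier (fatten O 𝒬) = frontier O ∪ ⋃ Q ∈ 𝒬, (frontier Q \ O) := by
  have hFO : ∀ {x}, x ∈ frontier O → x ∉ O :=
    fun hx => (disjoint_frontier_iff_isOpen.mpr hO).notMem_of_mem_left hx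
  rw [(isOpen_fatten hO hopen).frontier_eq, closure_fatten hO hopen hlf]
  ext x
  simp only [mem_sdiff, mem_union, mem_iUnion, exists_prop, mem_fatten]
  constructor
  · rintro ⟨hxcl | ⟨Q, hQ, hxQ⟩, hxF⟩
    · exact Or.inl (hO.frontier_eq ▸ ⟨hxcl, fun h => hxF (Or.inl h)⟩)
    by_cases hxO : x ∈ closure O
    · exact Or.inl (hO.frontier_eq ▸ ⟨hxO, fun h => hxF (Or.inl h)⟩)
    -- off `cl O` every point of `Q` lies in `𝐎`, so `x` is on the boundary of `Q`
    have hxQ' : x ∉ Q := fun h => hxF (Or.inr ⟨Q, hQ, h, fun h' => hxO (frontier_subset_closure h')⟩)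
    exact Or.inr ⟨Q, hQ, (hopen Q hQ).frontier_eq ▸ ⟨hxQ, hxQ'⟩, fun h => hxO (subset_closure h)⟩
  · rintro (hx | ⟨Q, hQ, hxQ, hxO⟩)
    · refine ⟨Or.inl (frontier_subset_closure hx), ?_⟩
      rintro (h | ⟨Q, -, -, h⟩)
      exacts [hFO hx h, h hx]
    · refine ⟨Or.inr ⟨Q, hQ, frontier_subset_closure hxQ⟩, ?_⟩
      rintro (h | ⟨Q', hQ', h, -⟩)
      exacts [hxO h, (hbd Q hQ Q' hQ').subset ⟨hxQ, h⟩]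

end Fatten
theorem locallyFinite_coe_of_finite_ball {X : Type*} [PseudoMetricSpace X] {𝒢 : Set (Set X)}
    (h : ∀ x : X, ∃ ρ : ℝ, 0 < ρ ∧ {Q ∈ 𝒢 | (ball x ρ ∩ Q).Nonempty}.Finite) :
    LocallyFinite ((↑) : 𝒢 → Set X) := by
  intro x
  obtain ⟨ρ, hρ, hfin⟩ := h x
  refine ⟨ball x ρ, ball_mem_nhds x hρ, (hfin.preimage Subtype.val_injective.injOn).subset ?_⟩
  rintro ⟨Q, hQ⟩ ⟨y, hyQ, hyb⟩
  exact ⟨hQ, y, hyb, hyQ⟩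

theorem fattening_boundary_decomposition_general {d : ℕ}
    (O D : Set (EuclideanSpace ℝ (Fin d))) (hO : IsOpen O)
    (δ : ℝ)
    (Grid : Set (Set (EuclideanSpace ℝ (Fin d))))
    (hopen : ∀ Q ∈ Grid, IsOpen Q)
    (hbd : ∀ Q ∈ Grid, ∀ Q' ∈ Grid, frontier Q ∩ Q' = ∅)
    (hlocfin : ∀ x : EuclideanSpace ℝ (Fin d), ∃ ρ : ℝ, 0 < ρ ∧
      {Q ∈ Grid | (Metric.ball x ρ ∩ Q).Nonempty}.Finite)
    (Sig' : Set (Set (EuclideanSpace ℝ (Fin d))))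
    (hSig' : Sig' = {Q ∈ Grid | (closure Q ∩ D).Nonempty ∧
      Q ∩ Nbhd (frontier O \ D) (δ / 4) = ∅})
    (bigO : Set (EuclideanSpace ℝ (Fin d)))
    (hbigO : bigO = O ∪ ⋃ Q ∈ Sig', (Q \ frontier O)) :
    frontier bigO = frontier O ∪ ⋃ Q ∈ Sig', (frontier Q \ O) ∧
    IsOpen (bigO \ O) ∧ frontier O ⊆ frontier bigO := by
  have hsub : Sig' ⊆ Grid := hSig' ▸ fun _ hQ => hQ.1
  have hopen' : ∀ Q ∈ Sig', IsOpen Q := fun Q hQ => hopen Q (hsub hQ)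
  have hlf : LocallyFinite ((↑) : Sig' → Set (EuclideanSpace ℝ (Fin d))) :=
    (locallyFinite_coe_of_finite_ball hlocfin).comp_injective (inclusion_injective hsub)
  have hfrontier : frontier (fatten O Sig') = frontier O ∪ ⋃ Q ∈ Sig', (frontier Q \ O) :=
    frontier_fatten hO hopen' hlf fun Q hQ Q' hQ' => hbd Q (hsub hQ) Q' (hsub hQ')
  subst hbigO
  exact ⟨hfrontier, isOpen_fatten_diff_self hopen', hfrontier ▸ subset_union_left⟩

/-- Boundary decomposition for the fattening construction: let `O ⊆ ℝ^d` be open,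
`D ⊆ ∂O` closed, `N = ∂O \ D`, and let `Grid` be a grid of pairwise disjoint open
axis-parallel cubes of diameter `δ/8` whose closures cover `ℝ^d`, with
`Σ' = {Q ∈ Grid : cl(Q) ∩ D ≠ ∅ and Q ∩ N_{δ/4} = ∅}`. Then, with
`𝐎 = O ∪ ⋃_{Q ∈ Σ'} (Q \ ∂O)`, one has
`∂𝐎 = ∂O ∪ ⋃_{Q ∈ Σ'} (∂Q \ O)`; in particular `𝐎 \ O` is open and `∂O ⊆ ∂𝐎`. -/
theorem fattening_boundary_decomposition {d : ℕ}
    (O D : Set (EuclideanSpace ℝ (Fin d))) (hO : IsOpen O)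
    (hD : D ⊆ frontier O) (hDclosed : IsClosed D) (δ : ℝ) (hδ : 0 < δ)
    (Grid : Set (Set (EuclideanSpace ℝ (Fin d))))
    (hcube : ∀ Q ∈ Grid, IsCube Q)
    (hopen : ∀ Q ∈ Grid, IsOpen Q)
    (hdiam : ∀ Q ∈ Grid, EMetric.diam Q = ENNReal.ofReal (δ / 8))
    (hdisj : ∀ Q ∈ Grid, ∀ Q' ∈ Grid, Q ≠ Q' → Q ∩ Q' = ∅)
    (hbd : ∀ Q ∈ Grid, ∀ Q' ∈ Grid, frontier Q ∩ Q' = ∅)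
    (hcover : ⋃ Q ∈ Grid, closure Q = Set.univ)
    (hlocfin : ∀ x : EuclideanSpace ℝ (Fin d), ∃ ρ : ℝ, 0 < ρ ∧
      {Q ∈ Grid | (Metric.ball x ρ ∩ Q).Nonempty}.Finite)
    (Sig' : Set (Set (EuclideanSpace ℝ (Fin d))))
    (hSig' : Sig' = {Q ∈ Grid | (closure Q ∩ D).Nonempty ∧
      Q ∩ Nbhd (frontier O \ D) (δ / 4) = ∅})
    (bigO : Set (EuclideanSpace ℝ (Fin d)))
    (hbigO : bigO = O ∪ ⋃ Q ∈ Sig', (Q \ frontier O)) :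
    frontier bigO = frontier O ∪ ⋃ Q ∈ Sig', (frontier Q \ O) ∧
    IsOpen (bigO \ O) ∧ frontier O ⊆ frontier bigO :=
  fattening_boundary_decomposition_general O D hO δ Grid hopen hbd hlocfin Sig' hSig' bigO hbigO
end

section
/- Invariance of the form domain under good projections transfers to the operator: Let H be a Hilbert space, V ⊆ H dense, a : V × V → ℂ a bounded coercive sesquilinear form, and L the associated operator in H. Let Q be an orthogonal projection on H that maps V boundedly into V and satisfies a(Qu, v) = a(u, Qv) for all u, v ∈ V. Then Q L ⊆ L Q, i.e., for every u ∈ dom(L) one has Qu ∈ dom(L) and L(Qu) = Q(Lu). -/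
open scoped InnerProductSpace

theorem proj_commutes_with_form_operator_general {V H : Type*}
    [NormedAddCommGroup V] [InnerProductSpace ℂ V]
    [NormedAddCommGroup H] [InnerProductSpace ℂ H]
    (e : V →L[ℂ] H)
    (a : V → V → ℂ)
    (L : H →ₗ.[ℂ] H)
    (hL : ∀ x f : H, (∃ hx : x ∈ L.domain, L ⟨x, hx⟩ = f) ↔
      ∃ v : V, e v = x ∧ ∀ w : V, a v w = ⟪e w, f⟫_ℂ)
    (Q : H →L[ℂ] H)
    (hsa : ∀ u v, ⟪Q u, v⟫_ℂ = ⟪u, Q v⟫_ℂ)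
    (Qv : V →L[ℂ] V)
    (hQv : ∀ v : V, e (Qv v) = Q (e v))
    (hform : ∀ u v : V, a (Qv u) v = a u (Qv v)) :
    ∀ (x : H) (hx : x ∈ L.domain), ∃ h : Q x ∈ L.domain,
      L ⟨Q x, h⟩ = Q (L ⟨x, hx⟩) := by
  intro x hx
  obtain ⟨v, rfl, hav⟩ := (hL x _).mp ⟨hx, rfl⟩
  refine (hL (Q (e v)) _).mpr ⟨Qv v, hQv v, fun w => ?_⟩
  calc a (Qv v) w = a v (Qv w) := hform v w
    _ = ⟪e (Qv w), L ⟨e v, hx⟩⟫_ℂ := hav (Qv w)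
    _ = ⟪e w, Q (L ⟨e v, hx⟩)⟫_ℂ := by rw [hQv, hsa]

/-- Invariance of the form domain under good projections transfers to the operator:
let `V` be a Hilbert space densely and continuously embedded (via `e`) in a Hilbert
space `H`, `a : V × V → ℂ` a bounded coercive sesquilinear form with associated
operator `L` in `H`, and let `Q` be an orthogonal projection on `H` which maps `V`
boundedly into itself (via `Qv` with `e ∘ Qv = Q ∘ e`) and satisfies
`a(Qu, v) = a(u, Qv)`. Then `Q L ⊆ L Q`: for every `x ∈ dom L` one has `Qx ∈ dom L`
and `L(Qx) = Q(Lx)`. -/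
theorem proj_commutes_with_form_operator {V H : Type*}
    [NormedAddCommGroup V] [InnerProductSpace ℂ V] [CompleteSpace V]
    [NormedAddCommGroup H] [InnerProductSpace ℂ H] [CompleteSpace H]
    (e : V →L[ℂ] H) (hinj : Function.Injective e) (hdense : DenseRange e)
    (a : V → V → ℂ)
    (hadd₁ : ∀ u v w : V, a (u + v) w = a u w + a v w)
    (hsmul₁ : ∀ (z : ℂ) (u v : V), a (z • u) v = z * a u v)
    (hadd₂ : ∀ u v w : V, a u (v + w) = a u v + a u w)
    (hsmul₂ : ∀ (z : ℂ) (u v : V), a u (z • v) = starRingEnd ℂ z * a u v)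
    (M : ℝ) (hM : 0 < M) (hbdd : ∀ u v : V, ‖a u v‖ ≤ M * ‖u‖ * ‖v‖)
    (lam : ℝ) (hlam : 0 < lam) (hcoercive : ∀ u : V, lam * ‖u‖ ^ 2 ≤ (a u u).re)
    (L : H →ₗ.[ℂ] H)
    (hL : ∀ x f : H, (∃ hx : x ∈ L.domain, L ⟨x, hx⟩ = f) ↔
      ∃ v : V, e v = x ∧ ∀ w : V, a v w = ⟪e w, f⟫_ℂ)
    (Q : H →L[ℂ] H)
    (hidem : ∀ u, Q (Q u) = Q u)
    (hsa : ∀ u v, ⟪Q u, v⟫_ℂ = ⟪u, Q v⟫_ℂ)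
    (Qv : V →L[ℂ] V)
    (hQv : ∀ v : V, e (Qv v) = Q (e v))
    (hform : ∀ u v : V, a (Qv u) v = a u (Qv v)) :
    ∀ (x : H) (hx : x ∈ L.domain), ∃ h : Q x ∈ L.domain,
      L ⟨Q x, h⟩ = Q (L ⟨x, hx⟩) :=
  proj_commutes_with_form_operator_general e a L hL Q hsa Qv hQv hform
end

section
/- Decomposition of the square root property: Let H be a Hilbert space decomposed into invariant pieces by pairwise orthogonal projections (Qᵢ) with H ≅ ⊕ᵢ QᵢH via S : u ↦ (Qᵢu)ᵢ, let V ⊆ H be a Hilbert space densely embedded with V ≅ ⊕ᵢ QᵢV under the same map, and let L be a maximal accretive invertible operator in H commuting with all Qᵢ, with parts Lᵢ = L Qᵢ* in QᵢH and Vᵢ = QᵢV. Then the following are equivalent: (i) dom(√L) = V with ‖√L u‖_H ≈ ‖u‖_V; (ii) for all i, dom(√Lᵢ) = Vᵢ with ‖√Lᵢ u‖ ≈ ‖u‖_{Vᵢ} with implicit constants independent of i. -/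
/-!
Direction (i) ⇒ (ii) is immediate. For (ii) ⇒ (i), commutation gives `Qᵢ √L u = √L Qᵢ u`, so the
pieces `√L Qᵢ u` are mutually orthogonal and `‖√L u‖² = ∑ ‖√L Qᵢ u‖² ≈ ∑ ‖Qᵢ u‖²_V ≈ ‖u‖²_V`.
For `u ∈ V` the series `∑ √L Qᵢ u` therefore converges, and since `√L` is closed (its resolvent at
`-1` is bounded) `u ∈ dom √L`. Conversely, for `u ∈ dom √L` every `Qᵢ u` is some `vᵢ ∈ Vᵢ` with
`∑ ‖vᵢ‖²_V ≲ ‖√L u‖²`, and the lower bound of `V ≅ ⊕ᵢ Vᵢ` makes `∑ vᵢ` converge in `V` to a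
preimage of `u`.
-/

open scoped InnerProductSpace

section Adapted

variable {ι E F : Type*}

structure IsAdapted [Zero E] [FunLike F E E] (P : ι → F) (f : ι → E) : Prop where
  apply_self : ∀ i, P i (f i) = f i
  apply_of_ne : ∀ i j, i ≠ j → P j (f i) = 0

theorem IsAdapted.apply_sum [AddCommMonoid E] [FunLike F E E] [AddMonoidHomClass F E E]
    [DecidableEq ι] {P : ι → F} {f : ι → E} (hf : IsAdapted P f) (t : Finset ι) (j : ι) :
    P j (∑ i ∈ t, f i) = if j ∈ t then f j else 0 := by
  rw [map_sum]
  split_ifs with hj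
  · rw [Finset.sum_eq_single_of_mem j hj fun i _ hij => hf.apply_of_ne i j hij]
    exact hf.apply_self j
  · exact Finset.sum_eq_zero fun i hi => hf.apply_of_ne i j (ne_of_mem_of_not_mem hi hj)

theorem IsAdapted.mul_norm_sq_sum_le [SeminormedAddCommGroup E] [FunLike F E E]
    [AddMonoidHomClass F E E] {P : ι → F} {f : ι → E} (hf : IsAdapted P f) {a : ℝ}
    (hP : ∀ u, a * ‖u‖ ^ 2 ≤ ∑' j, ‖P j u‖ ^ 2) (t : Finset ι) :
    a * ‖∑ i ∈ t, f i‖ ^ 2 ≤ ∑ i ∈ t, ‖f i‖ ^ 2 := by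
  classical
  calc a * ‖∑ i ∈ t, f i‖ ^ 2 ≤ ∑' j, ‖P j (∑ i ∈ t, f i)‖ ^ 2 := hP _
    _ = ∑ j ∈ t, ‖f j‖ ^ 2 := by
      rw [tsum_eq_sum (s := t) fun j hj => by simp [hf.apply_sum, hj]]
      exact Finset.sum_congr rfl fun j hj => by simp [hf.apply_sum, hj]

theorem IsAdapted.summable [NormedAddCommGroup E] [CompleteSpace E] [FunLike F E E]
    [AddMonoidHomClass F E E] {P : ι → F} {f : ι → E} (hf : IsAdapted P f) {a : ℝ}
    (ha : 0 < a) (hP : ∀ u, a * ‖u‖ ^ 2 ≤ ∑' j, ‖P j u‖ ^ 2)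
    (hsq : Summable fun i => ‖f i‖ ^ 2) : Summable f := by
  refine summable_iff_vanishing_norm.mpr fun ε hε => ?_
  obtain ⟨s, hs⟩ := summable_iff_vanishing_norm.mp hsq (a * ε ^ 2) (by positivity)
  refine ⟨s, fun t hts => lt_of_pow_lt_pow_left₀ 2 hε.le ?_⟩
  have hsmall : ∑ i ∈ t, ‖f i‖ ^ 2 < a * ε ^ 2 :=
    (le_abs_self _).trans_lt (hs t hts)
  exact lt_of_mul_lt_mul_left ((hf.mul_norm_sq_sum_le hP t).trans_lt hsmall) ha.le

end Adapted

/-- A bounded `S = (1 + T)⁻¹` makes `T` closed, hence compatible with convergent sums. -/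
theorem LinearPMap.exists_apply_eq_of_hasSum {R E ι : Type*} [Ring R] [AddCommGroup E]
    [Module R E] [TopologicalSpace E] [ContinuousAdd E] [T2Space E] {T : E →ₗ.[R] E}
    {S : E →L[R] E} (hST : ∀ u : T.domain, S (u + T u) = u)
    (hTS : ∀ v, ∃ hv : S v ∈ T.domain, S v + T ⟨S v, hv⟩ = v)
    {u : ι → T.domain} {x y : E} (hx : HasSum (fun i => (u i : E)) x)
    (hy : HasSum (fun i => T (u i)) y) : ∃ hx : x ∈ T.domain, T ⟨x, hx⟩ = y := by
  have hxS : x = S (x + y) := by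
    have := S.hasSum (hx.add hy)
    simp only [hST] at this
    exact hx.unique this
  obtain ⟨hv, hSv⟩ := hTS (x + y)
  generalize S (x + y) = z at hxS hv hSv
  subst hxS
  exact ⟨hv, add_left_cancel hSv⟩

section OrthogonalDecomposition

variable {𝕜 H ι : Type*} [RCLike 𝕜] [NormedAddCommGroup H] [InnerProductSpace 𝕜 H]

structure IsOrthogonalDecomposition (Q : ι → H →L[𝕜] H) : Prop where
  idem : ∀ i u, Q i (Q i u) = Q i u
  symm : ∀ i u v, ⟪Q i u, v⟫_𝕜 = ⟪u, Q i v⟫_𝕜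
  orth : ∀ i j, i ≠ j → ∀ u, Q i (Q j u) = 0
  hasSum : ∀ u, HasSum (fun i => Q i u) u

variable {Q : ι → H →L[𝕜] H}

theorem IsOrthogonalDecomposition.hasSum_norm_sq (hQ : IsOrthogonalDecomposition Q) (u : H) :
    HasSum (fun i => ‖Q i u‖ ^ 2) (‖u‖ ^ 2) := by
  have hinner : HasSum (fun i => ⟪u, Q i u⟫_𝕜) ⟪u, u⟫_𝕜 := (innerSL 𝕜 u).hasSum (hQ.hasSum u)
  have hQQ : ∀ i, ⟪u, Q i u⟫_𝕜 = ⟪Q i u, Q i u⟫_𝕜 := fun i => by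
    rw [hQ.symm, hQ.idem]
  simp only [hQQ, inner_self_eq_norm_sq_to_K] at hinner
  exact_mod_cast hinner

theorem IsOrthogonalDecomposition.summable_of_isAdapted [CompleteSpace H]
    (hQ : IsOrthogonalDecomposition Q) {f : ι → H} (hf : IsAdapted Q f)
    (hsq : Summable fun i => ‖f i‖ ^ 2) : Summable f :=
  hf.summable one_pos (fun u => by rw [one_mul, (hQ.hasSum_norm_sq u).tsum_eq]) hsq

end OrthogonalDecomposition

section SquareSummable

variable {ι : Type*} {f g : ι → ℝ} {c : ℝ}

theorem summable_sq_of_le_mul (hf : ∀ i, 0 ≤ f i) (hfg : ∀ i, f i ≤ c * g i)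
    (hg : Summable fun i => g i ^ 2) : Summable fun i => f i ^ 2 :=
  (hg.mul_left (c ^ 2)).of_nonneg_of_le (fun i => sq_nonneg _) fun i => by
    rw [← mul_pow]; exact pow_le_pow_left₀ (hf i) (hfg i) 2

theorem tsum_sq_le_mul_tsum_sq (hf : ∀ i, 0 ≤ f i) (hfg : ∀ i, f i ≤ c * g i)
    (hg : Summable fun i => g i ^ 2) : ∑' i, f i ^ 2 ≤ c ^ 2 * ∑' i, g i ^ 2 := by
  rw [← tsum_mul_left]
  exact (summable_sq_of_le_mul hf hfg hg).tsum_le_tsum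
    (fun i => by rw [← mul_pow]; exact pow_le_pow_left₀ (hf i) (hfg i) 2) (hg.mul_left _)

end SquareSummable

def LinearPMap.CommutesWith {R E : Type*} [Ring R] [AddCommGroup E] [Module R E]
    [TopologicalSpace E] (T : E →ₗ.[R] E) (P : E →L[R] E) : Prop :=
  ∀ u : T.domain, ∃ h : P u ∈ T.domain, P (T u) = T ⟨P u, h⟩

section Kato

variable {𝕜 V H ι : Type*} [RCLike 𝕜] [NormedAddCommGroup V] [NormedSpace 𝕜 V]
  [NormedAddCommGroup H] [InnerProductSpace 𝕜 H]
  {Q : ι → H →L[𝕜] H} {QV : ι → V →L[𝕜] V} {e : V →L[𝕜] H} {T : H →ₗ.[𝕜] H} {c₁ c₂ : ℝ}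

/-- The square root property `dom T = V`, `‖T u‖ ≈ ‖u‖_V` of the paper, restricted to `S`. -/
def KatoPropertyOn (T : H →ₗ.[𝕜] H) (e : V →L[𝕜] H) (c₁ c₂ : ℝ) (S : Set H) : Prop :=
  (∀ x ∈ S, x ∈ T.domain ↔ ∃ v, e v = x) ∧
    ∀ v, e v ∈ S → ∀ h : e v ∈ T.domain, c₁ * ‖v‖ ≤ ‖T ⟨e v, h⟩‖ ∧ ‖T ⟨e v, h⟩‖ ≤ c₂ * ‖v‖

theorem exists_piece_mem_domain (hQ : IsOrthogonalDecomposition Q)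
    (hQV : ∀ i v, e (QV i v) = Q i (e v))
    (hloc : ∀ i, KatoPropertyOn T e c₁ c₂ {x | Q i x = x}) (v : V) (i : ι) :
    ∃ h : Q i (e v) ∈ T.domain,
      c₁ * ‖QV i v‖ ≤ ‖T ⟨Q i (e v), h⟩‖ ∧ ‖T ⟨Q i (e v), h⟩‖ ≤ c₂ * ‖QV i v‖ := by
  rw [← hQV]
  have hfix : Q i (e (QV i v)) = e (QV i v) := by rw [hQV, hQ.idem]
  have hmem := ((hloc i).1 _ hfix).2 ⟨_, rfl⟩
  exact ⟨hmem, (hloc i).2 _ hfix hmem⟩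

theorem isAdapted_apply_pieces (hQ : IsOrthogonalDecomposition Q)
    (hcomm : ∀ i, T.CommutesWith (Q i)) {x : H} (hx : ∀ i, Q i x ∈ T.domain) :
    IsAdapted Q fun i => T ⟨Q i x, hx i⟩ where
  apply_self i := by
    obtain ⟨_, h⟩ := hcomm i ⟨Q i x, hx i⟩
    rw [h]
    congr 2
    exact hQ.idem i x
  apply_of_ne i j hij := by
    obtain ⟨_, h⟩ := hcomm j ⟨Q i x, hx i⟩
    rw [h]
    convert T.map_zero using 2
    exact Subtype.ext (hQ.orth j i hij.symm x)

theorem mem_domain_of_pieces [CompleteSpace H] (hQ : IsOrthogonalDecomposition Q)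
    (hQV : ∀ i v, e (QV i v) = Q i (e v))
    (hVsum : ∀ v, Summable fun i => ‖QV i v‖ ^ 2)
    {S : H →L[𝕜] H} (hST : ∀ u : T.domain, S (u + T u) = u)
    (hTS : ∀ w, ∃ hw : S w ∈ T.domain, S w + T ⟨S w, hw⟩ = w)
    (hcomm : ∀ i, T.CommutesWith (Q i))
    (hloc : ∀ i, KatoPropertyOn T e c₁ c₂ {x | Q i x = x}) (v : V) : e v ∈ T.domain := by
  choose hdom _ hupper using exists_piece_mem_domain hQ hQV hloc v
  have hsq : Summable fun i => ‖T ⟨Q i (e v), hdom i⟩‖ ^ 2 :=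
    summable_sq_of_le_mul (fun _ => norm_nonneg _) hupper (hVsum v)
  have hsum := (hQ.summable_of_isAdapted (isAdapted_apply_pieces hQ hcomm hdom) hsq).hasSum
  exact (T.exists_apply_eq_of_hasSum hST hTS (u := fun i => ⟨Q i (e v), hdom i⟩)
    (hQ.hasSum (e v)) hsum).1

theorem norm_bounds_of_pieces (hQ : IsOrthogonalDecomposition Q)
    (hQV : ∀ i v, e (QV i v) = Q i (e v)) {α β : ℝ} (hα : 0 ≤ α) (hβ : 0 ≤ β)
    (hVsum : ∀ v, Summable fun i => ‖QV i v‖ ^ 2)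
    (hVlow : ∀ v, α * ‖v‖ ^ 2 ≤ ∑' i, ‖QV i v‖ ^ 2)
    (hVup : ∀ v, ∑' i, ‖QV i v‖ ^ 2 ≤ β * ‖v‖ ^ 2)
    (hc₁ : 0 < c₁) (hc₂ : 0 ≤ c₂) (hcomm : ∀ i, T.CommutesWith (Q i))
    (hloc : ∀ i, KatoPropertyOn T e c₁ c₂ {x | Q i x = x}) (v : V) (h : e v ∈ T.domain) :
    c₁ * √α * ‖v‖ ≤ ‖T ⟨e v, h⟩‖ ∧ ‖T ⟨e v, h⟩‖ ≤ c₂ * √β * ‖v‖ := by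
  choose hdom hlower hupper using exists_piece_mem_domain hQ hQV hloc v
  have hpyth : ∑' i, ‖T ⟨Q i (e v), hdom i⟩‖ ^ 2 = ‖T ⟨e v, h⟩‖ ^ 2 := by
    rw [← (hQ.hasSum_norm_sq (T ⟨e v, h⟩)).tsum_eq]
    exact tsum_congr fun i => by rw [(hcomm i ⟨e v, h⟩).2]
  have hlower' : ∀ i, ‖QV i v‖ ≤ c₁⁻¹ * ‖T ⟨Q i (e v), hdom i⟩‖ := fun i =>
    (le_inv_mul_iff₀ hc₁).mpr (hlower i)
  have hsq : Summable fun i => ‖T ⟨Q i (e v), hdom i⟩‖ ^ 2 :=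
    summable_sq_of_le_mul (fun _ => norm_nonneg _) hupper (hVsum v)
  constructor
  · refine le_of_pow_le_pow_left₀ two_ne_zero (norm_nonneg _) ?_
    calc (c₁ * √α * ‖v‖) ^ 2 = c₁ ^ 2 * (α * ‖v‖ ^ 2) := by
          rw [mul_pow, mul_pow, Real.sq_sqrt hα]; ring
      _ ≤ c₁ ^ 2 * ∑' i, ‖QV i v‖ ^ 2 := by gcongr c₁ ^ 2 * ?_; exact hVlow v
      _ ≤ c₁ ^ 2 * (c₁⁻¹ ^ 2 * ‖T ⟨e v, h⟩‖ ^ 2) := by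
          gcongr c₁ ^ 2 * ?_
          exact hpyth ▸ tsum_sq_le_mul_tsum_sq (fun _ => norm_nonneg _) hlower' hsq
      _ = ‖T ⟨e v, h⟩‖ ^ 2 := by field_simp
  · refine le_of_pow_le_pow_left₀ two_ne_zero (by positivity) ?_
    calc ‖T ⟨e v, h⟩‖ ^ 2 ≤ c₂ ^ 2 * ∑' i, ‖QV i v‖ ^ 2 :=
          hpyth ▸ tsum_sq_le_mul_tsum_sq (fun _ => norm_nonneg _) hupper (hVsum v)
      _ ≤ c₂ ^ 2 * (β * ‖v‖ ^ 2) := by gcongr c₂ ^ 2 * ?_; exact hVup v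
      _ = (c₂ * √β * ‖v‖) ^ 2 := by rw [mul_pow, mul_pow, Real.sq_sqrt hβ]; ring

theorem exists_eq_of_mem_domain_of_pieces [CompleteSpace V] (hQ : IsOrthogonalDecomposition Q)
    (hQV : ∀ i v, e (QV i v) = Q i (e v)) (he : Function.Injective e) {α : ℝ} (hα : 0 < α)
    (hVlow : ∀ v, α * ‖v‖ ^ 2 ≤ ∑' i, ‖QV i v‖ ^ 2) (hc₁ : 0 < c₁)
    (hcomm : ∀ i, T.CommutesWith (Q i))
    (hloc : ∀ i, KatoPropertyOn T e c₁ c₂ {x | Q i x = x}) {x : H} (hx : x ∈ T.domain) :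
    ∃ v, e v = x := by
  have hpiece : ∀ i, ∃ w, e w = Q i x := fun i =>
    ((hloc i).1 _ (hQ.idem i x)).1 (hcomm i ⟨x, hx⟩).1
  choose w hw using hpiece
  have hadapted : IsAdapted QV w :=
    ⟨fun i => he (by rw [hQV, hw, hQ.idem]),
      fun i j hij => he (by rw [hQV, hw, map_zero, hQ.orth j i hij.symm])⟩
  have hbound : ∀ i, c₁ * ‖w i‖ ≤ ‖Q i (T ⟨x, hx⟩)‖ := fun i => by
    obtain ⟨hmem, hTQ⟩ := hcomm i ⟨x, hx⟩
    rw [hTQ]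
    convert ((hloc i).2 (w i) (by rw [hw]; exact hQ.idem i x) (hw i ▸ hmem)).1 using 4
    exact (hw i).symm
  have hsq : Summable fun i => ‖w i‖ ^ 2 :=
    summable_sq_of_le_mul (fun _ => norm_nonneg _) (fun i => (le_inv_mul_iff₀ hc₁).mpr (hbound i))
      (hQ.hasSum_norm_sq (T ⟨x, hx⟩)).summable
  refine ⟨∑' i, w i, (e.hasSum (hadapted.summable hα hVlow hsq).hasSum).unique ?_⟩
  simpa only [hw] using hQ.hasSum x

end Kato

theorem sqrt_kato_decomposition_general {V H : Type*}
    [NormedAddCommGroup V] [InnerProductSpace ℂ V] [CompleteSpace V]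
    [NormedAddCommGroup H] [InnerProductSpace ℂ H] [CompleteSpace H]
    {ι : Type*}
    (Q : ι → H →L[ℂ] H)
    (hidem : ∀ i, ∀ u, Q i (Q i u) = Q i u)
    (hsa : ∀ i, ∀ u v, ⟪Q i u, v⟫_ℂ = ⟪u, Q i v⟫_ℂ)
    (hpair : ∀ i j, i ≠ j → ∀ u, Q i (Q j u) = 0)
    (hsum : ∀ u : H, HasSum (fun i => Q i u) u)
    (e : V →L[ℂ] H) (hinj : Function.Injective e)
    (QV : ι → V →L[ℂ] V)
    (hQV : ∀ i, ∀ v : V, e (QV i v) = Q i (e v))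
    (α β : ℝ) (hα : 0 < α) (hβ : 0 < β)
    (hisoV : ∀ v : V, Summable (fun i => ‖QV i v‖ ^ 2) ∧
      α * ‖v‖ ^ 2 ≤ ∑' i, ‖QV i v‖ ^ 2 ∧ ∑' i, ‖QV i v‖ ^ 2 ≤ β * ‖v‖ ^ 2)
    (L : H →ₗ.[ℂ] H)
    (Rt : H →ₗ.[ℂ] H)
    (hRtmaxacc : ∀ z : ℂ, 0 < z.re → ∃ R : H →L[ℂ] H,
      (∀ u : Rt.domain, R (z • (u : H) + Rt u) = u) ∧
      (∀ v : H, ∃ hv : R v ∈ Rt.domain, z • R v + Rt ⟨R v, hv⟩ = v) ∧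
      ‖R‖ ≤ (z.re)⁻¹)
    (hRtcomm : ∀ i, ∀ u : Rt.domain, ∃ h : Q i u ∈ Rt.domain,
      Q i (Rt u) = Rt ⟨Q i (u : H), h⟩) :
    ((∀ x : H, x ∈ Rt.domain ↔ ∃ v : V, e v = x) ∧
      ∃ c₁ c₂ : ℝ, 0 < c₁ ∧ 0 < c₂ ∧ ∀ (v : V) (h : e v ∈ Rt.domain),
        c₁ * ‖v‖ ≤ ‖Rt ⟨e v, h⟩‖ ∧ ‖Rt ⟨e v, h⟩‖ ≤ c₂ * ‖v‖) ↔
    (∃ c₁ c₂ : ℝ, 0 < c₁ ∧ 0 < c₂ ∧ ∀ i : ι,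
      (∀ x : H, Q i x = x → (x ∈ Rt.domain ↔ ∃ v : V, e v = x)) ∧
      ∀ (v : V), Q i (e v) = e v → ∀ h : e v ∈ Rt.domain,
        c₁ * ‖v‖ ≤ ‖Rt ⟨e v, h⟩‖ ∧ ‖Rt ⟨e v, h⟩‖ ≤ c₂ * ‖v‖) := by
  have hQ : IsOrthogonalDecomposition Q := ⟨hidem, hsa, hpair, hsum⟩
  have hVsum := fun v => (hisoV v).1
  have hVlow := fun v => (hisoV v).2.1
  have hVup := fun v => (hisoV v).2.2
  constructor
  · rintro ⟨hdom, c₁, c₂, hc₁, hc₂, hbounds⟩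
    exact ⟨c₁, c₂, hc₁, hc₂, fun i => ⟨fun x _ => hdom x, fun v _ => hbounds v⟩⟩
  · rintro ⟨c₁, c₂, hc₁, hc₂, hloc⟩
    obtain ⟨S, hST, hTS, -⟩ := hRtmaxacc 1 (by norm_num)
    simp only [one_smul] at hST hTS
    refine ⟨fun x => ⟨fun hx => ?_, ?_⟩, c₁ * √α, c₂ * √β, by positivity, by positivity,
      norm_bounds_of_pieces hQ hQV hα.le hβ.le hVsum hVlow hVup hc₁ hc₂.le hRtcomm hloc⟩
    · exact exists_eq_of_mem_domain_of_pieces hQ hQV hinj hα hVlow hc₁ hRtcomm hloc hx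
    · rintro ⟨v, rfl⟩
      exact mem_domain_of_pieces hQ hQV hVsum hST hTS hRtcomm hloc v

/-- Decomposition of the square root property (Kato estimate) along an
`ℓ²`-decomposition by pairwise orthogonal projections: let `H ≅ ⊕ᵢ QᵢH` via
`S : u ↦ (Qᵢu)ᵢ`, let `V` be densely embedded in `H` (via `e`) with `V ≅ ⊕ᵢ QᵢV` under
the same map, and let `L` be a maximal accretive invertible operator in `H` commuting
with all `Qᵢ`, with parts `Lᵢ = L Qᵢ*` and `Vᵢ = Qᵢ V`, and with maximal accretive
square root `Rt = √L`. Then the following are equivalent: (i) `dom √L = V` with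
`‖√L u‖_H ≈ ‖u‖_V`; (ii) for all `i`, `dom √Lᵢ = Vᵢ` with `‖√Lᵢ u‖ ≈ ‖u‖_{Vᵢ}` and
implicit constants independent of `i`. -/
theorem sqrt_kato_decomposition {V H : Type*}
    [NormedAddCommGroup V] [InnerProductSpace ℂ V] [CompleteSpace V]
    [NormedAddCommGroup H] [InnerProductSpace ℂ H] [CompleteSpace H]
    {ι : Type*} [Countable ι]
    (Q : ι → H →L[ℂ] H)
    (hidem : ∀ i, ∀ u, Q i (Q i u) = Q i u)
    (hsa : ∀ i, ∀ u v, ⟪Q i u, v⟫_ℂ = ⟪u, Q i v⟫_ℂ)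
    (hpair : ∀ i j, i ≠ j → ∀ u, Q i (Q j u) = 0)
    (hsum : ∀ u : H, HasSum (fun i => Q i u) u)
    (e : V →L[ℂ] H) (hinj : Function.Injective e) (hdense : DenseRange e)
    (QV : ι → V →L[ℂ] V)
    (hQV : ∀ i, ∀ v : V, e (QV i v) = Q i (e v))
    (hsumV : ∀ v : V, HasSum (fun i => QV i v) v)
    (α β : ℝ) (hα : 0 < α) (hβ : 0 < β)
    (hisoV : ∀ v : V, Summable (fun i => ‖QV i v‖ ^ 2) ∧
      α * ‖v‖ ^ 2 ≤ ∑' i, ‖QV i v‖ ^ 2 ∧ ∑' i, ‖QV i v‖ ^ 2 ≤ β * ‖v‖ ^ 2)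
    (L : H →ₗ.[ℂ] H)
    (hLdense : Dense (L.domain : Set H))
    (hmaxacc : ∀ z : ℂ, 0 < z.re → ∃ R : H →L[ℂ] H,
      (∀ u : L.domain, R (z • (u : H) + L u) = u) ∧
      (∀ v : H, ∃ hv : R v ∈ L.domain, z • R v + L ⟨R v, hv⟩ = v) ∧
      ‖R‖ ≤ (z.re)⁻¹)
    (Linv : H →L[ℂ] H)
    (hLinv₁ : ∀ u : L.domain, Linv (L u) = u)
    (hLinv₂ : ∀ v : H, ∃ hv : Linv v ∈ L.domain, L ⟨Linv v, hv⟩ = v)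
    (hLcomm : ∀ i, ∀ u : L.domain, ∃ h : Q i u ∈ L.domain,
      Q i (L u) = L ⟨Q i (u : H), h⟩)
    (Rt : H →ₗ.[ℂ] H)
    (hRtdense : Dense (Rt.domain : Set H))
    (hRtacc : ∀ u : Rt.domain, 0 ≤ (⟪Rt u, (u : H)⟫_ℂ).re)
    (hRtmaxacc : ∀ z : ℂ, 0 < z.re → ∃ R : H →L[ℂ] H,
      (∀ u : Rt.domain, R (z • (u : H) + Rt u) = u) ∧
      (∀ v : H, ∃ hv : R v ∈ Rt.domain, z • R v + Rt ⟨R v, hv⟩ = v) ∧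
      ‖R‖ ≤ (z.re)⁻¹)
    (hsq_dom : ∀ x : H, x ∈ L.domain ↔
      ∃ h : x ∈ Rt.domain, Rt ⟨x, h⟩ ∈ Rt.domain)
    (hsq : ∀ (x : H) (hx : x ∈ L.domain) (h₁ : x ∈ Rt.domain)
      (h₂ : Rt ⟨x, h₁⟩ ∈ Rt.domain), Rt ⟨Rt ⟨x, h₁⟩, h₂⟩ = L ⟨x, hx⟩)
    (hRtcomm : ∀ i, ∀ u : Rt.domain, ∃ h : Q i u ∈ Rt.domain,
      Q i (Rt u) = Rt ⟨Q i (u : H), h⟩) :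
    ((∀ x : H, x ∈ Rt.domain ↔ ∃ v : V, e v = x) ∧
      ∃ c₁ c₂ : ℝ, 0 < c₁ ∧ 0 < c₂ ∧ ∀ (v : V) (h : e v ∈ Rt.domain),
        c₁ * ‖v‖ ≤ ‖Rt ⟨e v, h⟩‖ ∧ ‖Rt ⟨e v, h⟩‖ ≤ c₂ * ‖v‖) ↔
    (∃ c₁ c₂ : ℝ, 0 < c₁ ∧ 0 < c₂ ∧ ∀ i : ι,
      (∀ x : H, Q i x = x → (x ∈ Rt.domain ↔ ∃ v : V, e v = x)) ∧
      ∀ (v : V), Q i (e v) = e v → ∀ h : e v ∈ Rt.domain,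
        c₁ * ‖v‖ ≤ ‖Rt ⟨e v, h⟩‖ ∧ ‖Rt ⟨e v, h⟩‖ ≤ c₂ * ‖v‖) :=
  sqrt_kato_decomposition_general Q hidem hsa hpair hsum e hinj QV hQV α β hα hβ hisoV L Rt
    hRtmaxacc hRtcomm
end
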